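/- arXiv:math/0702623 — 7 statements merged into one kernel-verified Lean document; each statement's English description precedes it below -/
import Mathlib

section
/- A sublattice Λ ⊆ ℤ² of rank 2 is well-rounded if and only if it has a basis x, y with ‖x‖ = ‖y‖ and |xᵗy| ≤ (1/2)·‖x‖·‖y‖. Moreover, if this is the case, then the set of minimal vectors of Λ is S(Λ) = {x, −x, y, −y}; in particular, a minimal basis for Λ is unique up to ± signs and reordering. -/
/-- The standard inner product of two vectors in `ℤ²`. -/
def dot2 (x y : Fin 2 → ℤ) : ℤ := x 0 * y 0 + x 1 * y 1

/-- The squared Euclidean norm of a vector in `ℤ²`. -/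
def normSq2 (x : Fin 2 → ℤ) : ℤ := x 0 ^ 2 + x 1 ^ 2

/-- The determinant of the pair of vectors `x`, `y` in `ℤ²`. -/
def det2 (x y : Fin 2 → ℤ) : ℤ := x 0 * y 1 - x 1 * y 0

/-- A sublattice of `ℤ²` is full-rank (rank 2) if it contains two linearly
independent vectors, i.e. its elements span `ℝ²`. -/
def IsFullRank (L : AddSubgroup (Fin 2 → ℤ)) : Prop :=
  ∃ x ∈ L, ∃ y ∈ L, det2 x y ≠ 0

/-- `x` is a minimal vector of the lattice `L`: it is a nonzero vector of `L` of
least Euclidean norm, i.e. `‖x‖ = |L|`. -/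
def IsMinVec (L : AddSubgroup (Fin 2 → ℤ)) (x : Fin 2 → ℤ) : Prop :=
  x ∈ L ∧ x ≠ 0 ∧ ∀ y ∈ L, y ≠ 0 → normSq2 x ≤ normSq2 y

/-- `L` is well-rounded: its minimal vectors span `ℝ²`, i.e. there exist two
linearly independent minimal vectors. -/
def IsWellRounded (L : AddSubgroup (Fin 2 → ℤ)) : Prop :=
  ∃ x y, IsMinVec L x ∧ IsMinVec L y ∧ det2 x y ≠ 0

/-- The sublattice of `ℤ²` spanned over `ℤ` by the vectors `v` and `w`. -/
def latticeOf (v w : Fin 2 → ℤ) : AddSubgroup (Fin 2 → ℤ) :=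
  AddSubgroup.closure {v, w}

/-!
Write `m = ‖x‖² = ‖y‖²` and `t = xᵗy` with `2|t| ≤ m`. Then
`‖a x + b y‖² = (a² + b²) m + 2abt ≥ (a² - |ab| + b²) m ≥ m` for all integers `(a, b) ≠ 0`,
so `x, y` are minimal vectors of the lattice they span, and equality forces `(a, b) = (±1, 0)` or
`(0, ±1)` as soon as `2|t| < m`. The case `2|t| = m` cannot occur in `ℤ²`: by Lagrange's identity
`det(x, y)² + t² = m²` it would give `4 det(x, y)² = 3 m²`, contradicting the irrationality of `√3`.
Conversely, two independent minimal vectors `x, y` of `Λ` satisfy `2|t| ≤ m` (compare with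
`x ± y`), and they span `Λ`: for `z ∈ Λ`, rounding the Cramer coefficients of `z` gives `w = z - a x - b y ∈ Λ`
with `‖w‖² ≤ 3m/4 < m`, so `w = 0`.
-/

theorem four_mul_sq_ne_three_mul_sq (d : ℤ) {m : ℤ} (hm : m ≠ 0) : 4 * d ^ 2 ≠ 3 * m ^ 2 := by
  intro h
  have h3 : ¬IsSquare (3 : ℚ) := by norm_num
  refine h3 ⟨2 * d / m, ?_⟩
  have hm' : (m : ℚ) ≠ 0 := mod_cast hm
  field_simp
  exact_mod_cast h.symm

theorem Int.exists_two_mul_abs_sub_mul_le (p : ℤ) {d : ℤ} (hd : d ≠ 0) :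
    ∃ a : ℤ, 2 * |p - a * d| ≤ |d| := by
  refine ⟨round ((p : ℚ) / d), ?_⟩
  have hd' : (d : ℚ) ≠ 0 := mod_cast hd
  have h := abs_sub_round ((p : ℚ) / d)
  have key : ((p - round ((p : ℚ) / d) * d : ℤ) : ℚ) = d * ((p : ℚ) / d - round ((p : ℚ) / d)) := by
    push_cast; field_simp
  have : 2 * |((p - round ((p : ℚ) / d) * d : ℤ) : ℚ)| ≤ |(d : ℚ)| := by
    rw [key, abs_mul]
    nlinarith [abs_nonneg (d : ℚ)]
  exact_mod_cast this

theorem one_le_sq_sub_abs_mul_add_sq {a b : ℤ} (hab : a ≠ 0 ∨ b ≠ 0) :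
    1 ≤ a ^ 2 - |a * b| + b ^ 2 := by
  rw [abs_mul, ← sq_abs a, ← sq_abs b]
  have ha := abs_nonneg a
  have hb := abs_nonneg b
  have : 0 < |a| ∨ 0 < |b| := by simpa only [abs_pos] using hab
  rcases this with h | h <;> nlinarith [sq_nonneg (|a| - |b|), mul_nonneg ha hb]

theorem four_mul_sq_le_mul_self_iff {t m : ℤ} (hm : 0 ≤ m) : 4 * t ^ 2 ≤ m * m ↔ 2 * |t| ≤ m := by
  rw [show 4 * t ^ 2 = (2 * |t|) ^ 2 by rw [mul_pow, sq_abs]; norm_num, ← sq,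
    pow_le_pow_iff_left₀ (by positivity) hm two_ne_zero]

section QuadraticForm

variable {m t a b : ℤ}

theorem abs_two_mul_mul_mul_le (ht : 2 * |t| ≤ m) : |2 * (a * b) * t| ≤ |a * b| * m := by
  rw [abs_mul, abs_mul, abs_two]
  linarith [mul_le_mul_of_nonneg_left ht (abs_nonneg (a * b))]

theorem le_sq_mul_add_two_mul_mul_add_sq_mul (ht : 2 * |t| ≤ m) (hab : a ≠ 0 ∨ b ≠ 0) :
    m ≤ a ^ 2 * m + 2 * a * b * t + b ^ 2 * m := by
  have h1 := one_le_sq_sub_abs_mul_add_sq hab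
  have h2 := neg_abs_le (2 * (a * b) * t) |>.trans' (neg_le_neg (abs_two_mul_mul_mul_le ht))
  have hm : 0 ≤ m := le_trans (by positivity) ht
  nlinarith

theorem mul_eq_zero_and_sq_add_sq_eq_one (ht : 2 * |t| < m) (hab : a ≠ 0 ∨ b ≠ 0)
    (h : a ^ 2 * m + 2 * a * b * t + b ^ 2 * m ≤ m) : a * b = 0 ∧ a ^ 2 + b ^ 2 = 1 := by
  have h1 := one_le_sq_sub_abs_mul_add_sq hab
  have hm : 0 < m := lt_of_le_of_lt (by positivity) ht
  have hab0 : a * b = 0 := by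
    by_contra hne
    have hpos : 0 < |a * b| := abs_pos.mpr hne
    have h2 := neg_abs_le (2 * (a * b) * t) |>.trans' (neg_le_neg (abs_two_mul_mul_mul_le le_rfl))
    nlinarith [mul_lt_mul_of_pos_left ht hpos]
  rw [hab0, abs_zero, sub_zero] at h1
  refine ⟨hab0, le_antisymm ?_ h1⟩
  have : (a ^ 2 + b ^ 2) * m ≤ 1 * m := by linear_combination h - 2 * t * hab0
  exact le_of_mul_le_mul_right this hm

theorem four_mul_sq_mul_add_two_mul_mul_add_sq_mul_le {p q D : ℤ} (ht : 2 * |t| ≤ m)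
    (hp : 2 * |p| ≤ |D|) (hq : 2 * |q| ≤ |D|) :
    4 * (p ^ 2 * m + 2 * p * q * t + q ^ 2 * m) ≤ 3 * (D ^ 2 * m) := by
  have hm : 0 ≤ m := le_trans (by positivity) ht
  have hpq := le_abs_self (2 * (p * q) * t) |>.trans (abs_two_mul_mul_mul_le ht)
  have hD : 0 ≤ |D| := abs_nonneg D
  have hp2 : 4 * p ^ 2 ≤ D ^ 2 := by nlinarith [sq_abs p, sq_abs D, abs_nonneg p]
  have hq2 : 4 * q ^ 2 ≤ D ^ 2 := by nlinarith [sq_abs q, sq_abs D, abs_nonneg q]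
  have hpq2 : 4 * |p * q| ≤ D ^ 2 := by
    rw [abs_mul]; nlinarith [sq_abs D, abs_nonneg p, abs_nonneg q]
  nlinarith [mul_le_mul_of_nonneg_right (add_le_add (add_le_add hp2 hq2) hpq2) hm]

end QuadraticForm

section Vectors

variable {x y : Fin 2 → ℤ}

theorem normSq2_pos (hx : x ≠ 0) : 0 < normSq2 x := by
  have h : x 0 ≠ 0 ∨ x 1 ≠ 0 := by
    by_contra! h
    exact hx (funext fun i => by fin_cases i <;> simp [h.1, h.2])
  unfold normSq2
  rcases h with h | h <;> positivity

theorem normSq2_nonneg (x : Fin 2 → ℤ) : 0 ≤ normSq2 x := by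
  unfold normSq2; positivity

theorem dot2_comm (x y : Fin 2 → ℤ) : dot2 x y = dot2 y x := by
  unfold dot2; ring

theorem normSq2_smul_add_smul (a b : ℤ) (x y : Fin 2 → ℤ) :
    normSq2 (a • x + b • y) = a ^ 2 * normSq2 x + 2 * a * b * dot2 x y + b ^ 2 * normSq2 y := by
  simp only [normSq2, dot2, Pi.add_apply, Pi.smul_apply, smul_eq_mul]; ring

theorem normSq2_smul (c : ℤ) (x : Fin 2 → ℤ) : normSq2 (c • x) = c ^ 2 * normSq2 x := by
  simp only [normSq2, Pi.smul_apply, smul_eq_mul]; ring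

theorem normSq2_neg (x : Fin 2 → ℤ) : normSq2 (-x) = normSq2 x := by
  simp only [normSq2, Pi.neg_apply]; ring

theorem normSq2_add (x y : Fin 2 → ℤ) :
    normSq2 (x + y) = normSq2 x + 2 * dot2 x y + normSq2 y := by
  simp only [normSq2, dot2, Pi.add_apply]; ring

theorem normSq2_sub (x y : Fin 2 → ℤ) :
    normSq2 (x - y) = normSq2 x - 2 * dot2 x y + normSq2 y := by
  simp only [normSq2, dot2, Pi.sub_apply]; ring

theorem det2_sq_add_dot2_sq (x y : Fin 2 → ℤ) :
    det2 x y ^ 2 + dot2 x y ^ 2 = normSq2 x * normSq2 y := by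
  unfold det2 dot2 normSq2; ring

theorem det2_smul_eq (x y z : Fin 2 → ℤ) : det2 x y • z = det2 z y • x + det2 x z • y := by
  funext i
  fin_cases i <;> simp [det2] <;> ring

theorem det2_self (x : Fin 2 → ℤ) : det2 x x = 0 := by
  unfold det2; ring

theorem det2_neg_right (x y : Fin 2 → ℤ) : det2 x (-y) = -det2 x y := by
  simp only [det2, Pi.neg_apply]; ring

theorem ne_zero_left_of_det2_ne_zero (h : det2 x y ≠ 0) : x ≠ 0 := by
  rintro rfl; simp [det2] at h

theorem ne_zero_right_of_det2_ne_zero (h : det2 x y ≠ 0) : y ≠ 0 := by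
  rintro rfl; simp [det2] at h

end Vectors

theorem two_mul_abs_dot2_lt {x y : Fin 2 → ℤ} (hd : det2 x y ≠ 0) (hxy : normSq2 x = normSq2 y)
    (ht : 2 * |dot2 x y| ≤ normSq2 x) : 2 * |dot2 x y| < normSq2 x := by
  refine ht.lt_of_ne fun h => ?_
  have hm := normSq2_pos (ne_zero_left_of_det2_ne_zero hd)
  have h4 : 4 * dot2 x y ^ 2 = normSq2 x ^ 2 := by rw [← h, mul_pow, sq_abs]; ring
  have hlag := det2_sq_add_dot2_sq x y
  rw [← hxy] at hlag
  exact four_mul_sq_ne_three_mul_sq (det2 x y) hm.ne' (by linear_combination 4 * hlag - h4)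

namespace IsMinVec

variable {L : AddSubgroup (Fin 2 → ℤ)} {x y z : Fin 2 → ℤ}

theorem normSq2_eq (hx : IsMinVec L x) (hy : IsMinVec L y) : normSq2 x = normSq2 y :=
  le_antisymm (hx.2.2 y hy.1 hy.2.1) (hy.2.2 x hx.1 hx.2.1)

theorem of_normSq2_eq (hx : IsMinVec L x) (hz : z ∈ L) (hz0 : z ≠ 0)
    (h : normSq2 z = normSq2 x) : IsMinVec L z :=
  ⟨hz, hz0, fun w hw hw0 => h ▸ hx.2.2 w hw hw0⟩

theorem neg (hx : IsMinVec L x) : IsMinVec L (-x) :=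
  hx.of_normSq2_eq (neg_mem hx.1) (neg_ne_zero.mpr hx.2.1) (normSq2_neg x)

theorem two_mul_abs_dot2_le (hx : IsMinVec L x) (hy : IsMinVec L y) (hd : det2 x y ≠ 0) :
    2 * |dot2 x y| ≤ normSq2 x := by
  have hxy := hx.normSq2_eq hy
  have hadd : x + y ≠ 0 := by
    intro h
    rw [eq_neg_of_add_eq_zero_right h, det2_neg_right, det2_self, neg_zero] at hd
    exact hd rfl
  have hsub : x - y ≠ 0 := by
    intro h
    rw [← sub_eq_zero.mp h, det2_self] at hd
    exact hd rfl
  have h1 := hx.2.2 _ (add_mem hx.1 hy.1) hadd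
  have h2 := hx.2.2 _ (sub_mem hx.1 hy.1) hsub
  rw [normSq2_add, ← hxy] at h1
  rw [normSq2_sub, ← hxy] at h2
  rcases abs_cases (dot2 x y) with ⟨h, -⟩ | ⟨h, -⟩ <;> rw [h] <;> linarith

theorem closure_pair_eq (hx : IsMinVec L x) (hy : y ∈ L) (hd : det2 x y ≠ 0)
    (hxy : normSq2 x = normSq2 y) (ht : 2 * |dot2 x y| ≤ normSq2 x) :
    AddSubgroup.closure {x, y} = L := by
  refine le_antisymm ((AddSubgroup.closure_le L).mpr ?_) fun z hz => ?_
  · exact Set.insert_subset_iff.mpr ⟨hx.1, Set.singleton_subset_iff.mpr hy⟩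
  set D := det2 x y
  obtain ⟨a, ha⟩ := Int.exists_two_mul_abs_sub_mul_le (det2 z y) hd
  obtain ⟨b, hb⟩ := Int.exists_two_mul_abs_sub_mul_le (det2 x z) hd
  rw [AddSubgroup.mem_closure_pair]
  refine ⟨a, b, ?_⟩
  set p := det2 z y - a * D
  set q := det2 x z - b * D
  set w := z - (a • x + b • y) with hw
  have hwL : w ∈ L := sub_mem hz (add_mem (zsmul_mem hx.1 a) (zsmul_mem hy b))
  have hDw : D • w = p • x + q • y := by
    rw [hw, smul_sub, det2_smul_eq]; module
  have hnorm :
      D ^ 2 * normSq2 w = p ^ 2 * normSq2 x + 2 * p * q * dot2 x y + q ^ 2 * normSq2 x := by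
    rw [← normSq2_smul, hDw, normSq2_smul_add_smul, ← hxy]
  have hbound := four_mul_sq_mul_add_two_mul_mul_add_sq_mul_le ht ha hb
  rw [← hnorm] at hbound
  by_contra hne
  have hmin := hx.2.2 w hwL (sub_ne_zero.mpr (Ne.symm hne))
  have hD2 : 0 < D ^ 2 := by positivity
  nlinarith [mul_le_mul_of_nonneg_left hmin hD2.le, mul_pos hD2 (normSq2_pos hx.2.1)]

end IsMinVec

section Basis

variable {L : AddSubgroup (Fin 2 → ℤ)} {x y : Fin 2 → ℤ}

theorem isMinVec_of_closure_pair_eq (hcl : AddSubgroup.closure {x, y} = L) (hx0 : x ≠ 0)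
    (hxy : normSq2 x = normSq2 y) (ht : 2 * |dot2 x y| ≤ normSq2 x) : IsMinVec L x := by
  refine ⟨hcl ▸ AddSubgroup.subset_closure (Set.mem_insert x _), hx0, fun w hw hw0 => ?_⟩
  obtain ⟨a, b, rfl⟩ := AddSubgroup.mem_closure_pair.mp (hcl ▸ hw)
  have hab : a ≠ 0 ∨ b ≠ 0 := by
    by_contra! h
    exact hw0 (by simp [h.1, h.2])
  rw [normSq2_smul_add_smul, ← hxy]
  exact le_sq_mul_add_two_mul_mul_add_sq_mul ht hab

theorem isMinVec_right_of_closure_pair_eq (hcl : AddSubgroup.closure {x, y} = L) (hy0 : y ≠ 0)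
    (hxy : normSq2 x = normSq2 y) (ht : 2 * |dot2 x y| ≤ normSq2 x) : IsMinVec L y :=
  isMinVec_of_closure_pair_eq (Set.pair_comm x y ▸ hcl) hy0 hxy.symm (dot2_comm x y ▸ hxy ▸ ht)

theorem setOf_isMinVec_eq (hcl : AddSubgroup.closure {x, y} = L) (hd : det2 x y ≠ 0)
    (hxy : normSq2 x = normSq2 y) (ht : 2 * |dot2 x y| ≤ normSq2 x) :
    {z | IsMinVec L z} = {x, -x, y, -y} := by
  have hxm := isMinVec_of_closure_pair_eq hcl (ne_zero_left_of_det2_ne_zero hd) hxy ht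
  have hym := isMinVec_right_of_closure_pair_eq hcl (ne_zero_right_of_det2_ne_zero hd) hxy ht
  ext z
  simp only [Set.mem_ofPred_eq, Set.mem_insert_iff, Set.mem_singleton_iff]
  constructor
  · intro hz
    obtain ⟨a, b, rfl⟩ := AddSubgroup.mem_closure_pair.mp (hcl ▸ hz.1)
    have hab : a ≠ 0 ∨ b ≠ 0 := by
      by_contra! h
      exact hz.2.1 (by simp [h.1, h.2])
    have hle := (hz.normSq2_eq hxm).le
    rw [normSq2_smul_add_smul, ← hxy] at hle
    obtain ⟨hab0, hsq⟩ :=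
      mul_eq_zero_and_sq_add_sq_eq_one (two_mul_abs_dot2_lt hd hxy ht) hab hle
    rcases mul_eq_zero.mp hab0 with rfl | rfl
    · rcases (by simpa using hsq : b = 1 ∨ b = -1) with rfl | rfl <;> simp
    · rcases (by simpa using hsq : a = 1 ∨ a = -1) with rfl | rfl <;> simp
  · rintro (rfl | rfl | rfl | rfl)
    exacts [hxm, hxm.neg, hym, hym.neg]

end Basis

theorem stmt0_general (Λ : AddSubgroup (Fin 2 → ℤ)) :
    (IsWellRounded Λ ↔
      ∃ x y : Fin 2 → ℤ, AddSubgroup.closure {x, y} = Λ ∧ det2 x y ≠ 0 ∧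
        normSq2 x = normSq2 y ∧ 4 * dot2 x y ^ 2 ≤ normSq2 x * normSq2 y) ∧
    (∀ x y : Fin 2 → ℤ, AddSubgroup.closure {x, y} = Λ → det2 x y ≠ 0 →
      normSq2 x = normSq2 y → 4 * dot2 x y ^ 2 ≤ normSq2 x * normSq2 y →
      {z : Fin 2 → ℤ | IsMinVec Λ z} = {x, -x, y, -y}) := by
  have hsmall {x y : Fin 2 → ℤ} (hxy : normSq2 x = normSq2 y) :
      4 * dot2 x y ^ 2 ≤ normSq2 x * normSq2 y ↔ 2 * |dot2 x y| ≤ normSq2 x := by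
    rw [← hxy]
    exact four_mul_sq_le_mul_self_iff (normSq2_nonneg x)
  refine ⟨⟨?_, ?_⟩, fun x y hcl hd hxy ht => setOf_isMinVec_eq hcl hd hxy ((hsmall hxy).mp ht)⟩
  · rintro ⟨x, y, hx, hy, hd⟩
    have hxy := hx.normSq2_eq hy
    have ht := hx.two_mul_abs_dot2_le hy hd
    exact ⟨x, y, hx.closure_pair_eq hy.1 hd hxy ht, hd, hxy, (hsmall hxy).mpr ht⟩
  · rintro ⟨x, y, hcl, hd, hxy, ht⟩
    rw [hsmall hxy] at ht
    exact ⟨x, y, isMinVec_of_closure_pair_eq hcl (ne_zero_left_of_det2_ne_zero hd) hxy ht,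
      isMinVec_right_of_closure_pair_eq hcl (ne_zero_right_of_det2_ne_zero hd) hxy ht, hd⟩

/-- A full-rank sublattice `Λ ⊆ ℤ²` is well-rounded if and only if it has a basis `x, y`
with `‖x‖ = ‖y‖` and `|xᵗy| ≤ (1/2)‖x‖‖y‖` (equivalently `4(xᵗy)² ≤ ‖x‖²‖y‖²`).
Moreover, in that case the set of minimal vectors of `Λ` is `{x, −x, y, −y}`. -/
theorem stmt0 (Λ : AddSubgroup (Fin 2 → ℤ)) (hfr : IsFullRank Λ) :
    (IsWellRounded Λ ↔
      ∃ x y : Fin 2 → ℤ, AddSubgroup.closure {x, y} = Λ ∧ det2 x y ≠ 0 ∧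
        normSq2 x = normSq2 y ∧ 4 * dot2 x y ^ 2 ≤ normSq2 x * normSq2 y) ∧
    (∀ x y : Fin 2 → ℤ, AddSubgroup.closure {x, y} = Λ → det2 x y ≠ 0 →
      normSq2 x = normSq2 y → 4 * dot2 x y ^ 2 ≤ normSq2 x * normSq2 y →
      {z : Fin 2 → ℤ | IsMinVec Λ z} = {x, -x, y, -y}) :=
  stmt0_general Λ
end

section
/- Let a, b, c, d ∈ ℤ satisfy 0 < |d| ≤ |c| ≤ √3·|d| and max{|a|, |b|} > 0. Then the lattice Λ spanned over ℤ by the columns of the matrix with first column (ac+bd, bc−ad) and second column (ac−bd, bc+ad) is a full-rank well-rounded sublattice of ℤ², and det(Λ) = 2(a²+b²)|cd|. -/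
lemma index_toAddSubgroup_eq (N : Submodule ℤ (Fin 2 → ℤ)) (bN : Module.Basis (Fin 2) ℤ N) :
    N.toAddSubgroup.index = ((Pi.basisFun ℤ (Fin 2)).det ((↑) ∘ bN)).natAbs := by
  obtain ⟨n, snf⟩ := N.smithNormalForm (Pi.basisFun ℤ (Fin 2))
  have hn : n = 2 := by
    have e := Module.Basis.indexEquiv bN snf.bN
    simpa using (Fintype.card_congr e).symm
  subst hn
  have hfb : Function.Bijective snf.f := Finite.injective_iff_bijective.mp snf.f.injective
  let ef : Fin 2 ≃ Fin 2 := Equiv.ofBijective snf.f hfb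
  -- the index side
  rw [snf.toAddSubgroup_index_eq_ite]
  rw [if_pos (by simp)]
  -- the det side
  have h1 : (Pi.basisFun ℤ (Fin 2)).det ((↑) ∘ bN)
      = LinearMap.det (N.subtype ∘ₗ
        ((Pi.basisFun ℤ (Fin 2)).equiv bN (Equiv.refl _) : (Fin 2 → ℤ) →ₗ[ℤ] N)) := by
    rw [← Module.Basis.det_comp_basis]
    rfl
  let e₂ : (Fin 2 → ℤ) ≃ₗ[ℤ] N := snf.bM.equiv snf.bN ef.symm
  have h2 : ((Pi.basisFun ℤ (Fin 2)).det ((↑) ∘ bN)).natAbs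
      = (LinearMap.det (N.subtype ∘ₗ (e₂ : (Fin 2 → ℤ) →ₗ[ℤ] N))).natAbs := by
    rw [h1]
    exact Int.natAbs_eq_iff_associated.mpr
      (LinearMap.associated_det_comp_equiv N.subtype _ _)
  rw [h2]
  have h3 : LinearMap.det (N.subtype ∘ₗ (e₂ : (Fin 2 → ℤ) →ₗ[ℤ] N)) = ∏ i, snf.a i := by
    classical
    rw [← LinearMap.det_toMatrix snf.bM]
    have hm : LinearMap.toMatrix snf.bM snf.bM (N.subtype ∘ₗ (e₂ : (Fin 2 → ℤ) →ₗ[ℤ] N))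
        = Matrix.diagonal (fun i => snf.a (ef.symm i)) := by
      ext i j
      rw [LinearMap.toMatrix_apply]
      have : (N.subtype ∘ₗ (e₂ : (Fin 2 → ℤ) →ₗ[ℤ] N)) (snf.bM j)
          = snf.a (ef.symm j) • snf.bM j := by
        simp only [LinearMap.comp_apply, LinearEquiv.coe_coe, e₂, Module.Basis.equiv_apply,
          Submodule.coe_subtype]
        rw [snf.snf, show snf.f (ef.symm j) = j from ef.apply_symm_apply j]
      rw [this, map_smul, Module.Basis.repr_self]
      by_cases h : i = j
      · subst h; simp
      · simp [h, Finsupp.single_eq_of_ne (Ne.symm h), Matrix.diagonal_apply_ne _ h]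
    rw [hm, Matrix.det_diagonal]
    exact Equiv.prod_comp ef.symm snf.a
  rw [h3]
  simp [Int.index_zmultiples, Fin.prod_univ_two, Int.natAbs_mul]

lemma mem_latticeOf {v w x : Fin 2 → ℤ} :
    x ∈ latticeOf v w ↔ ∃ m n : ℤ, m • v + n • w = x :=
  AddSubgroup.mem_closure_pair

lemma latticeOf_index (v w : Fin 2 → ℤ) (h : det2 v w ≠ 0) :
    (latticeOf v w).index = (det2 v w).natAbs := by
  have hli : LinearIndependent ℤ ![v, w] := by
    rw [LinearIndependent.pair_iff]
    intro s t hst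
    have h0 := congrFun hst 0
    have h1 := congrFun hst 1
    simp only [Pi.add_apply, Pi.smul_apply, smul_eq_mul, Pi.zero_apply] at h0 h1
    constructor
    · have : s * det2 v w = 0 := by unfold det2; linear_combination w 1 * h0 - w 0 * h1
      exact (mul_eq_zero.mp this).resolve_right h
    · have : t * det2 v w = 0 := by unfold det2; linear_combination (-(v 1)) * h0 + v 0 * h1
      exact (mul_eq_zero.mp this).resolve_right h
  have hrange : Set.range ![v, w] = {v, w} := by
    ext x
    simp [Fin.exists_fin_two, or_comm]
  have hL : latticeOf v w = (Submodule.span ℤ (Set.range ![v, w])).toAddSubgroup := by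
    rw [hrange, Submodule.span_int_eq_addSubgroupClosure]
    rfl
  let bN := Module.Basis.span hli
  rw [hL, index_toAddSubgroup_eq _ bN]
  congr 1
  have hcoe : ((↑) ∘ bN : Fin 2 → (Fin 2 → ℤ)) = ![v, w] := by
    funext i
    show (bN i : Fin 2 → ℤ) = ![v, w] i
    rw [Module.Basis.span_apply]
  rw [hcoe, Module.Basis.det_apply, Matrix.det_fin_two]
  simp [Module.Basis.toMatrix_apply, det2]
  ring

lemma one_le_sq_of_ne_zero {x : ℤ} (hx : x ≠ 0) : 1 ≤ x ^ 2 := by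
  have h := Int.one_le_abs hx
  nlinarith [sq_abs x, abs_nonneg x]

lemma key_ineq (c d m n : ℤ) (hdc : d ^ 2 ≤ c ^ 2) (hc3 : c ^ 2 ≤ 3 * d ^ 2)
    (hmn : ¬(m = 0 ∧ n = 0)) :
    c ^ 2 + d ^ 2 ≤ (m + n) ^ 2 * c ^ 2 + (m - n) ^ 2 * d ^ 2 := by
  have hd2 : (0:ℤ) ≤ d ^ 2 := sq_nonneg d
  have hc2 : (0:ℤ) ≤ c ^ 2 := sq_nonneg c
  by_cases hp : m + n = 0
  · have hn : n ≠ 0 := fun h => hmn ⟨by omega, h⟩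
    have h1 : 1 ≤ n ^ 2 := one_le_sq_of_ne_zero hn
    have h4 : 4 * n ^ 2 = (m - n) ^ 2 := by
      have hm : m = -n := by omega
      rw [hm]; ring
    nlinarith
  by_cases hq : m - n = 0
  · have hm : m ≠ 0 := fun h => hmn ⟨h, by omega⟩
    have h1 : 1 ≤ m ^ 2 := one_le_sq_of_ne_zero hm
    have h4 : 4 * m ^ 2 = (m + n) ^ 2 := by
      have hn : n = m := by omega
      rw [hn]; ring
    nlinarith
  · have h1 : 1 ≤ (m + n) ^ 2 := one_le_sq_of_ne_zero hp
    have h2 : 1 ≤ (m - n) ^ 2 := one_le_sq_of_ne_zero hq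
    nlinarith

/-- If `0 < |d| ≤ |c| ≤ √3·|d|` and `max{|a|,|b|} > 0`, then the lattice spanned by
the columns `(ac+bd, bc−ad)` and `(ac−bd, bc+ad)` is a full-rank well-rounded
sublattice of `ℤ²` of determinant `2(a²+b²)|cd|`. -/
theorem stmt1 (a b c d : ℤ) (h1 : 0 < |d|) (h2 : |d| ≤ |c|)
    (h3 : (|c| : ℝ) ≤ Real.sqrt 3 * (|d| : ℝ)) (h4 : 0 < max |a| |b|) :
    IsFullRank (latticeOf ![a*c+b*d, b*c-a*d] ![a*c-b*d, b*c+a*d]) ∧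
    IsWellRounded (latticeOf ![a*c+b*d, b*c-a*d] ![a*c-b*d, b*c+a*d]) ∧
    ((latticeOf ![a*c+b*d, b*c-a*d] ![a*c-b*d, b*c+a*d]).index : ℤ)
      = 2 * (a ^ 2 + b ^ 2) * |c * d| := by
  set v : Fin 2 → ℤ := ![a*c+b*d, b*c-a*d] with hv_def
  set w : Fin 2 → ℤ := ![a*c-b*d, b*c+a*d] with hw_def
  have hd : d ≠ 0 := by rwa [← abs_pos]
  have hc : c ≠ 0 := by rw [← abs_pos]; omega
  have hab : 0 < a ^ 2 + b ^ 2 := by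
    rcases lt_max_iff.mp h4 with h | h
    · have : a ≠ 0 := by rwa [← abs_pos]
      nlinarith [one_le_sq_of_ne_zero this, sq_nonneg b]
    · have : b ≠ 0 := by rwa [← abs_pos]
      nlinarith [one_le_sq_of_ne_zero this, sq_nonneg a]
  have hdc : d ^ 2 ≤ c ^ 2 := by
    nlinarith [mul_self_le_mul_self (abs_nonneg d) h2, sq_abs c, sq_abs d]
  have hc3 : c ^ 2 ≤ 3 * d ^ 2 := by
    have h3r : |(c:ℝ)| ≤ Real.sqrt 3 * |(d:ℝ)| := by exact_mod_cast h3
    have hsq : Real.sqrt 3 ^ 2 = 3 := Real.sq_sqrt (by norm_num)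
    have : (c:ℝ) ^ 2 ≤ 3 * (d:ℝ) ^ 2 := by
      nlinarith [mul_self_le_mul_self (abs_nonneg (c:ℝ)) h3r, sq_abs (c:ℝ), sq_abs (d:ℝ),
        Real.sqrt_nonneg 3, abs_nonneg ((d:ℝ))]
    exact_mod_cast this
  have hdet : det2 v w = 2 * (a ^ 2 + b ^ 2) * (c * d) := by
    simp only [det2, hv_def, hw_def, Matrix.cons_val_zero, Matrix.cons_val_one, Matrix.head_cons]
    ring
  have hdet_ne : det2 v w ≠ 0 := by
    rw [hdet]
    exact mul_ne_zero (mul_ne_zero two_ne_zero (by omega)) (mul_ne_zero hc hd)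
  have hnorm : ∀ m n : ℤ, normSq2 (m • v + n • w)
      = (a ^ 2 + b ^ 2) * ((m + n) ^ 2 * c ^ 2 + (m - n) ^ 2 * d ^ 2) := by
    intro m n
    simp only [normSq2, hv_def, hw_def, Pi.add_apply, Pi.smul_apply, smul_eq_mul,
      Matrix.cons_val_zero, Matrix.cons_val_one, Matrix.head_cons]
    ring
  have hvL : v ∈ latticeOf v w := mem_latticeOf.mpr ⟨1, 0, by simp⟩
  have hwL : w ∈ latticeOf v w := mem_latticeOf.mpr ⟨0, 1, by simp⟩
  have hvn : normSq2 v = (a ^ 2 + b ^ 2) * (c ^ 2 + d ^ 2) := by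
    have := hnorm 1 0; simpa using this
  have hwn : normSq2 w = (a ^ 2 + b ^ 2) * (c ^ 2 + d ^ 2) := by
    have := hnorm 0 1
    simp only [zero_smul, one_smul, zero_add] at this
    rw [this]; ring
  have hpos : 0 < (a ^ 2 + b ^ 2) * (c ^ 2 + d ^ 2) := by
    have : 0 < c ^ 2 + d ^ 2 := by nlinarith [one_le_sq_of_ne_zero hd, sq_nonneg c]
    positivity
  have hmin : ∀ y ∈ latticeOf v w, y ≠ 0 →
      (a ^ 2 + b ^ 2) * (c ^ 2 + d ^ 2) ≤ normSq2 y := by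
    intro y hy hy0
    obtain ⟨m, n, rfl⟩ := mem_latticeOf.mp hy
    have hmn : ¬(m = 0 ∧ n = 0) := by
      rintro ⟨rfl, rfl⟩
      simp at hy0
    rw [hnorm m n]
    exact mul_le_mul_of_nonneg_left (key_ineq c d m n hdc hc3 hmn) (le_of_lt hab)
  have hvne : v ≠ 0 := by
    intro h
    rw [← hvn, h] at hpos
    simp [normSq2] at hpos
  have hwne : w ≠ 0 := by
    intro h
    rw [← hwn, h] at hpos
    simp [normSq2] at hpos
  refine ⟨⟨v, hvL, w, hwL, hdet_ne⟩,
    ⟨v, w, ⟨hvL, hvne, fun y hy hy0 => hvn ▸ hmin y hy hy0⟩,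
      ⟨hwL, hwne, fun y hy hy0 => hwn ▸ hmin y hy hy0⟩, hdet_ne⟩, ?_⟩
  rw [latticeOf_index v w hdet_ne]
  rw [← Int.abs_eq_natAbs, hdet, abs_mul, abs_of_nonneg (by positivity : (0:ℤ) ≤ 2 * (a ^ 2 + b ^ 2))]
end

section
/- The set 𝔐 of squared minima of full-rank well-rounded sublattices of ℤ², which equals the set of positive integers representable as a sum of two integer squares, has asymptotic density 0 in ℤ_{>0}; that is, lim_{M→∞} |{n ∈ 𝔐 : n ≤ M}|/M = 0. -/
/-- The set of squared minima of full-rank well-rounded sublattices of `ℤ²`. -/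
def minSet : Set ℕ :=
  {m | ∃ (Λ : AddSubgroup (Fin 2 → ℤ)) (x : Fin 2 → ℤ),
    IsFullRank Λ ∧ IsWellRounded Λ ∧ IsMinVec Λ x ∧ (m : ℤ) = normSq2 x}

section AuxStmt7
set_option maxHeartbeats 1000000
open Finset

lemma mem_latticeOf_s7 {v w z : Fin 2 → ℤ} (hz : z ∈ latticeOf v w) :
    ∃ s t : ℤ, z = s • v + t • w := by
  induction hz using AddSubgroup.closure_induction with
  | mem x hx =>
    rcases hx with h | h
    · exact ⟨1, 0, by simp [h]⟩
    · simp only [Set.mem_singleton_iff] at h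
      exact ⟨0, 1, by simp [h]⟩
  | zero => exact ⟨0, 0, by simp⟩
  | add x y _ _ hx hy =>
    obtain ⟨s, t, rfl⟩ := hx; obtain ⟨s', t', rfl⟩ := hy
    exact ⟨s + s', t + t', by module⟩
  | neg x _ hx =>
    obtain ⟨s, t, rfl⟩ := hx
    exact ⟨-s, -t, by module⟩

lemma normSq2_comb (a b s t : ℤ) :
    normSq2 (s • ![a, b] + t • ![-b, a]) = (s ^ 2 + t ^ 2) * (a ^ 2 + b ^ 2) := by
  simp [normSq2]
  ring

lemma minSet_eq : minSet = {n : ℕ | 0 < n ∧ ∃ a b : ℤ, (n : ℤ) = a ^ 2 + b ^ 2} := by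
  ext m
  constructor
  · rintro ⟨Λ, x, -, -, ⟨-, hx0, -⟩, hm⟩
    refine ⟨?_, x 0, x 1, hm⟩
    have h1 : x 0 ≠ 0 ∨ x 1 ≠ 0 := by
      by_contra h
      push_neg at h
      exact hx0 (funext fun i => by fin_cases i <;> simp [h.1, h.2])
    have : 0 < normSq2 x := by
      unfold normSq2
      rcases h1 with h | h
      · nlinarith [sq_nonneg (x 1), Int.one_le_abs h, sq_abs (x 0), sq_nonneg (|x 0| - 1)]
      · nlinarith [sq_nonneg (x 0), Int.one_le_abs h, sq_abs (x 1), sq_nonneg (|x 1| - 1)]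
    have := hm ▸ this
    exact_mod_cast this
  · rintro ⟨hm, a, b, hab⟩
    set v : Fin 2 → ℤ := ![a, b] with hv
    set w : Fin 2 → ℤ := ![-b, a] with hw
    have hvmem : v ∈ latticeOf v w := AddSubgroup.subset_closure (by simp)
    have hwmem : w ∈ latticeOf v w := AddSubgroup.subset_closure (by simp)
    have hnv : normSq2 v = a ^ 2 + b ^ 2 := by simp [normSq2, hv]
    have hnw : normSq2 w = a ^ 2 + b ^ 2 := by simp [normSq2, hw]; ring
    have hpos : (0 : ℤ) < a ^ 2 + b ^ 2 := by
      rw [← hab]; exact_mod_cast hm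
    have hvne : v ≠ 0 := by
      intro h
      rw [h] at hnv
      simp [normSq2] at hnv
      omega
    have hwne : w ≠ 0 := by
      intro h
      rw [h] at hnw
      simp [normSq2] at hnw
      omega
    have hmin : ∀ y ∈ latticeOf v w, y ≠ 0 → a ^ 2 + b ^ 2 ≤ normSq2 y := by
      intro y hy hy0
      obtain ⟨s, t, rfl⟩ := mem_latticeOf_s7 hy
      have hst : ¬(s = 0 ∧ t = 0) := by
        rintro ⟨rfl, rfl⟩
        simp at hy0
      have h1 : 1 ≤ s ^ 2 + t ^ 2 := by
        rcases (not_and_or.mp hst) with h | h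
        · nlinarith [sq_nonneg t, Int.one_le_abs (by omega : s ≠ 0), sq_abs s, sq_nonneg (|s| - 1)]
        · nlinarith [sq_nonneg s, Int.one_le_abs (by omega : t ≠ 0), sq_abs t, sq_nonneg (|t| - 1)]
      rw [normSq2_comb]
      nlinarith
    have hdet : det2 v w ≠ 0 := by
      have : det2 v w = a ^ 2 + b ^ 2 := by simp [det2, hv, hw]; ring
      omega
    have hvmin : IsMinVec (latticeOf v w) v := ⟨hvmem, hvne, fun y hy hy0 => hnv ▸ hmin y hy hy0⟩
    have hwmin : IsMinVec (latticeOf v w) w := ⟨hwmem, hwne, fun y hy hy0 => hnw ▸ hmin y hy hy0⟩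
    exact ⟨latticeOf v w, v, ⟨v, hvmem, w, hwmem, hdet⟩, ⟨v, w, hvmin, hwmin, hdet⟩,
      hvmin, by rw [hnv, hab]⟩

lemma sq_dvd_of_dvd_sq_add_sq {p : ℕ} (hp : p.Prime) (hp3 : p % 4 = 3) {a b : ℤ}
    {n : ℕ} (hn : (n : ℤ) = a ^ 2 + b ^ 2) (hdvd : p ∣ n) : p ^ 2 ∣ n := by
  haveI : Fact p.Prime := ⟨hp⟩
  have key : ∀ x y : ℤ, (x : ZMod p) ^ 2 + (y : ZMod p) ^ 2 = 0 → (x : ZMod p) = 0 := by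
    intro x y h
    by_contra hx
    have hsq : IsSquare (-1 : ZMod p) := by
      refine ⟨(y : ZMod p) * (x : ZMod p)⁻¹, ?_⟩
      have hx' : (x : ZMod p) * (x : ZMod p)⁻¹ = 1 := ZMod.mul_inv_of_unit _ (Ne.isUnit hx)
      have hy2 : (y : ZMod p) ^ 2 = -(x : ZMod p) ^ 2 := by linear_combination h
      field_simp
      linear_combination (-1 : ZMod p) * hy2
    exact (ZMod.exists_sq_eq_neg_one_iff.mp hsq) hp3
  have hmod : ((n : ℤ) : ZMod p) = 0 := by
    rw [ZMod.intCast_zmod_eq_zero_iff_dvd]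
    exact_mod_cast Int.natCast_dvd_natCast.mpr hdvd
  have h0 : (a : ZMod p) ^ 2 + (b : ZMod p) ^ 2 = 0 := by
    have := hn ▸ hmod
    push_cast at this
    linear_combination this
  have ha : (a : ZMod p) = 0 := key a b h0
  have hb : (b : ZMod p) = 0 := key b a (by linear_combination h0)
  rw [ZMod.intCast_zmod_eq_zero_iff_dvd] at ha hb
  obtain ⟨a', rfl⟩ := ha
  obtain ⟨b', rfl⟩ := hb
  have : ((p : ℤ)) ^ 2 ∣ (n : ℤ) := ⟨a' ^ 2 + b' ^ 2, by rw [hn]; ring⟩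
  exact_mod_cast this

lemma count_good_residues {p : ℕ} (hp : p.Prime) :
    (((range (p^2)).filter (fun r => p ∣ r → p^2 ∣ r)).card : ℕ) ≤ p^2 - (p - 1) := by
  have hp1 : 1 < p := hp.one_lt
  have hbad : p - 1 ≤ ((range (p^2)).filter (fun r => ¬(p ∣ r → p^2 ∣ r))).card := by
    have : (range (p-1)).card ≤ ((range (p^2)).filter (fun r => ¬(p ∣ r → p^2 ∣ r))).card := by
      apply Finset.card_le_card_of_injOn (fun k => (k+1) * p)
      · intro k hk
        simp only [Finset.mem_coe, mem_range] at hk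
        simp only [Finset.mem_coe, mem_filter, mem_range]
        refine ⟨?_, ?_⟩
        · have h1 : k + 1 < p := by omega
          calc (k+1) * p < p * p := Nat.mul_lt_mul_of_lt_of_le h1 le_rfl (by omega)
          _ = p ^ 2 := (sq p).symm
        · intro h
          have h2 := h ⟨k+1, by ring⟩
          rw [sq] at h2
          have : p ∣ k + 1 := (Nat.mul_dvd_mul_iff_right (by omega : 0 < p)).mp
            (by rwa [Nat.mul_comm p p] at h2 )
          have := Nat.le_of_dvd (by omega) this
          omega
      · intro x _ y _ h
        have := Nat.eq_of_mul_eq_mul_right (by omega : 0 < p) h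
        omega
    rw [card_range] at this
    exact this
  have hsplit := Finset.card_filter_add_card_filter_not
    (s := range (p^2)) (p := fun r => p ∣ r → p^2 ∣ r)
  rw [card_range] at hsplit
  beta_reduce at hsplit
  omega

lemma count_good_prod {P : Finset ℕ} (hP : ∀ p ∈ P, p.Prime) :
    (((range (∏ p ∈ P, p^2)).filter (fun r => ∀ p ∈ P, p ∣ r → p^2 ∣ r)).card : ℕ)
      ≤ ∏ p ∈ P, (p^2 - (p-1)) := by
  classical
  set B := ∏ p ∈ P, p^2 with hB
  have key : ((range B).filter (fun r => ∀ p ∈ P, p ∣ r → p^2 ∣ r)).card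
      ≤ (P.pi (fun p => (range (p^2)).filter (fun r => p ∣ r → p^2 ∣ r))).card := by
    apply Finset.card_le_card_of_injOn (fun r => fun p _ => r % p^2)
    · intro r hr
      simp only [Finset.mem_coe, mem_filter, mem_range] at hr
      rw [Finset.mem_coe, Finset.mem_pi]
      intro p hp
      simp only [mem_filter, mem_range]
      have hpp := (hP p hp).pos
      refine ⟨Nat.mod_lt _ (by positivity), ?_⟩
      intro hdvd
      have hp2B : p^2 ∣ B := Finset.dvd_prod_of_mem (fun p => p^2) hp
      have hpB : p ∣ B := dvd_trans (dvd_pow_self p two_ne_zero) hp2B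
      have h1 : p ∣ r := (Nat.dvd_mod_iff (dvd_trans (dvd_pow_self p two_ne_zero) dvd_rfl)).mp hdvd
      have h2 : p^2 ∣ r := hr.2 p hp h1
      exact (Nat.dvd_mod_iff dvd_rfl).mpr h2
    · intro r1 hr1 r2 hr2 heq
      simp only [Finset.mem_coe, mem_filter, mem_range] at hr1 hr2
      have hdvd : ∀ p ∈ P, ((p:ℤ)^2) ∣ ((r1 : ℤ) - r2) := by
        intro p hp
        have heq' : r1 % p^2 = r2 % p^2 := congrFun (congrFun heq p) hp
        have hmod : r1 ≡ r2 [MOD p^2] := heq'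
        have h := hmod.dvd
        have h2 := dvd_neg.mpr h
        rw [neg_sub] at h2
        exact_mod_cast h2
      have hcop : (↑P : Set ℕ).Pairwise (Function.onFun IsCoprime (fun p => (p:ℤ)^2)) := by
        intro p hp q hq hne
        have := (Nat.coprime_primes (hP p hp) (hP q hq)).mpr hne
        exact (IsCoprime.pow ((Nat.isCoprime_iff_coprime).mpr this))
      have hprod : (∏ p ∈ P, (p:ℤ)^2) ∣ ((r1 : ℤ) - r2) :=
        Finset.prod_dvd_of_coprime hcop hdvd
      have hBcast : (∏ p ∈ P, (p:ℤ)^2) = (B : ℤ) := by rw [hB]; push_cast; ring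
      rw [hBcast] at hprod
      have : (r1 : ℤ) - r2 = 0 := by
        refine Int.eq_zero_of_abs_lt_dvd hprod ?_
        rw [abs_sub_lt_iff]
        constructor <;> [skip; skip] <;> push_cast <;> omega
      omega
  calc _ ≤ (P.pi _).card := key
  _ = ∏ p ∈ P, ((range (p^2)).filter (fun r => p ∣ r → p^2 ∣ r)).card := Finset.card_pi _ _
  _ ≤ ∏ p ∈ P, (p^2 - (p-1)) := Finset.prod_le_prod' (fun p hp => count_good_residues (hP p hp))

lemma main_count {P : Finset ℕ} (hP : ∀ p ∈ P, p.Prime) (M : ℕ) (S : Finset ℕ)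
    (hS : ∀ n ∈ S, n ≤ M ∧ ∀ p ∈ P, p ∣ n → p^2 ∣ n) :
    S.card ≤ (M / (∏ p ∈ P, p^2) + 1) * ∏ p ∈ P, (p^2 - (p-1)) := by
  classical
  set B := ∏ p ∈ P, p^2 with hB
  have hBpos : 0 < B := Finset.prod_pos (fun p hp => pow_pos (hP p hp).pos 2)
  have key : S.card ≤ ((range (M / B + 1)) ×ˢ
      ((range B).filter (fun r => ∀ p ∈ P, p ∣ r → p^2 ∣ r))).card := by
    apply Finset.card_le_card_of_injOn (fun n => (n / B, n % B))
    · intro n hn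
      obtain ⟨hnM, hcond⟩ := hS n hn
      simp only [Finset.mem_coe, Finset.mem_product, mem_range, mem_filter]
      refine ⟨by have := Nat.div_le_div_right (c := B) hnM; omega,
        Nat.mod_lt _ hBpos, ?_⟩
      intro p hp hdvd
      have hp2B : p^2 ∣ B := Finset.dvd_prod_of_mem (fun p => p^2) hp
      have hpB : p ∣ B := dvd_trans (dvd_pow_self p two_ne_zero) hp2B
      have h1 : p ∣ n := (Nat.dvd_mod_iff hpB).mp hdvd
      exact (Nat.dvd_mod_iff hp2B).mpr (hcond p hp h1)
    · intro n1 _ n2 _ h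
      simp only [Prod.mk.injEq] at h
      have e1 := Nat.div_add_mod n1 B
      have e2 := Nat.div_add_mod n2 B
      rw [← e1, ← e2, h.1, h.2]
  calc S.card ≤ _ := key
  _ = (M / B + 1) * ((range B).filter (fun r => ∀ p ∈ P, p ∣ r → p^2 ∣ r)).card := by
      rw [Finset.card_product, card_range]
  _ ≤ (M / B + 1) * ∏ p ∈ P, (p^2 - (p-1)) :=
      Nat.mul_le_mul_left _ (count_good_prod hP)

noncomputable def zf (s : ℝ) : ℕ →* ℝ where
  toFun n := ((n : ℝ) ^ s)⁻¹
  map_one' := by simp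
  map_mul' m n := by
    push_cast
    rw [Real.mul_rpow (Nat.cast_nonneg m) (Nat.cast_nonneg n), mul_inv]

def chi4 (n : ℕ) : ℝ := if n % 4 = 1 then 1 else if n % 4 = 3 then -1 else 0

lemma chi4_mul (m n : ℕ) : chi4 (m * n) = chi4 m * chi4 n := by
  have h : (m * n) % 4 = (m % 4) * (n % 4) % 4 := Nat.mul_mod m n 4
  have hm : m % 4 = 0 ∨ m % 4 = 1 ∨ m % 4 = 2 ∨ m % 4 = 3 := by omega
  have hn : n % 4 = 0 ∨ n % 4 = 1 ∨ n % 4 = 2 ∨ n % 4 = 3 := by omega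
  unfold chi4
  rcases hm with hm|hm|hm|hm <;> rcases hn with hn|hn|hn|hn <;>
    rw [h, hm, hn] <;> norm_num

noncomputable def cf (s : ℝ) : ℕ →* ℝ where
  toFun n := chi4 n * ((n : ℝ) ^ s)⁻¹
  map_one' := by simp [chi4]
  map_mul' m n := by
    have hc := chi4_mul m n
    push_cast
    rw [hc, Real.mul_rpow (Nat.cast_nonneg m) (Nat.cast_nonneg n), mul_inv]
    ring

lemma zf_apply (s : ℝ) (n : ℕ) : zf s n = ((n : ℝ) ^ s)⁻¹ := rfl
lemma cf_apply (s : ℝ) (n : ℕ) : cf s n = chi4 n * ((n : ℝ) ^ s)⁻¹ := rfl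

lemma zf_nonneg (s : ℝ) (n : ℕ) : 0 ≤ zf s n := by
  rw [zf_apply]; positivity

lemma zf_zero {s : ℝ} (hs : s ≠ 0) : zf s 0 = 0 := by
  rw [zf_apply]
  simp [Real.zero_rpow hs]

lemma cf_zero (s : ℝ) : cf s 0 = 0 := by
  rw [cf_apply]
  simp [chi4]

lemma abs_cf_le (s : ℝ) (n : ℕ) : |cf s n| ≤ zf s n := by
  rw [cf_apply, zf_apply, abs_mul]
  have h1 : |chi4 n| ≤ 1 := by unfold chi4; split_ifs <;> norm_num
  have h2 : |((n : ℝ) ^ s)⁻¹| = ((n : ℝ) ^ s)⁻¹ := abs_of_nonneg (by positivity)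
  rw [h2]
  nlinarith [abs_nonneg (chi4 n), inv_nonneg.mpr (Real.rpow_nonneg (Nat.cast_nonneg n) s)]

lemma zf_summable {s : ℝ} (hs : 1 < s) : Summable (⇑(zf s)) :=
  Real.summable_nat_rpow_inv.mpr hs

lemma cf_summable {s : ℝ} (hs : 1 < s) : Summable (⇑(cf s)) := by
  refine Summable.of_abs (Summable.of_nonneg_of_le (fun n => abs_nonneg _)
    (fun n => abs_cf_le s n) (zf_summable hs))

-- partial sums of cf are at most 1
lemma cf_partial_le_one {s : ℝ} (hs : 1 < s) (N : ℕ) :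
    ∑ n ∈ range N, cf s n ≤ 1 := by
  have hval0 : ∀ j : ℕ, cf s (4 * j) = 0 := by
    intro j
    rw [cf_apply]
    have : (4 * j) % 4 = 0 := by omega
    simp [chi4, this]
  have hval2 : ∀ j : ℕ, cf s (4 * j + 2) = 0 := by
    intro j
    rw [cf_apply]
    have : (4 * j + 2) % 4 = 2 := by omega
    simp [chi4, this]
  have hval1 : ∀ j : ℕ, cf s (4 * j + 1) = (((4 * j + 1 : ℕ) : ℝ) ^ s)⁻¹ := by
    intro j
    rw [cf_apply]
    have : (4 * j + 1) % 4 = 1 := by omega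
    simp [chi4, this]
  have hval3 : ∀ j : ℕ, cf s (4 * j + 3) = -(((4 * j + 3 : ℕ) : ℝ) ^ s)⁻¹ := by
    intro j
    rw [cf_apply]
    have h3 : (4 * j + 3) % 4 = 3 := by omega
    simp [chi4, h3]
  have hmono : ∀ a b : ℕ, a ≤ b → 0 < a → (((b : ℕ) : ℝ) ^ s)⁻¹ ≤ (((a : ℕ) : ℝ) ^ s)⁻¹ := by
    intro a b hab ha
    have h1 : (0:ℝ) < (a : ℝ) ^ s := Real.rpow_pos_of_pos (by exact_mod_cast ha) s
    have h2 : ((a:ℝ)) ^ s ≤ ((b:ℝ)) ^ s :=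
      Real.rpow_le_rpow (Nat.cast_nonneg a) (by exact_mod_cast hab) (by linarith)
    exact inv_anti₀ h1 h2
  have key : ∀ j : ℕ, ∑ n ∈ range (4 * j), cf s n + (((4 * j + 1 : ℕ) : ℝ) ^ s)⁻¹ ≤ 1 := by
    intro j
    induction j with
    | zero => simp
    | succ j ih =>
      have e : 4 * (j + 1) = (4 * j) + 1 + 1 + 1 + 1 := by ring
      rw [e, Finset.sum_range_succ, Finset.sum_range_succ, Finset.sum_range_succ,
        Finset.sum_range_succ]
      have e1 : 4 * j + 1 + 1 = 4 * j + 2 := by ring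
      have e2 : 4 * j + 1 + 1 + 1 = 4 * j + 3 := by ring
      rw [e1, e2, hval0 j, hval1 j, hval2 j, hval3 j]
      rw [show 4 * j + 3 + 1 + 1 = 4 * j + 5 by omega]
      have hm : (((4 * j + 5 : ℕ) : ℝ) ^ s)⁻¹ ≤ (((4 * j + 3 : ℕ) : ℝ) ^ s)⁻¹ :=
        hmono _ _ (by omega) (by omega)
      linarith
  have h4 := Nat.div_add_mod N 4
  set j := N / 4 with hj
  set r := N % 4 with hr
  have hrlt : r < 4 := Nat.mod_lt _ (by norm_num)
  have hposj : (0:ℝ) ≤ (((4 * j + 1 : ℕ) : ℝ) ^ s)⁻¹ := by positivity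
  have hN : N = 4 * j + r := by omega
  interval_cases r
  · rw [hN]
    have := key j
    simpa using (by linarith : ∑ n ∈ range (4 * j), cf s n ≤ 1)
  · rw [hN, Finset.sum_range_succ, hval0 j]
    have := key j
    linarith
  · rw [hN, show 4 * j + 2 = (4 * j + 1) + 1 by omega, Finset.sum_range_succ,
      Finset.sum_range_succ, hval0 j, hval1 j]
    have := key j
    linarith
  · rw [hN, show 4 * j + 3 = ((4 * j + 1) + 1) + 1 by omega, Finset.sum_range_succ,
      Finset.sum_range_succ, Finset.sum_range_succ, hval0 j, hval1 j,
      show 4 * j + 1 + 1 = 4 * j + 2 by omega, hval2 j]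
    have := key j
    linarith

lemma tsum_smooth_cf_le {s : ℝ} (hs : 1 < s) :
    ∃ N₀ : ℕ, ∀ N ≥ N₀, ∑' m : (Nat.smoothNumbers N), cf s (m : ℕ) ≤ 2 := by
  obtain ⟨N₀, h⟩ := EulerProduct.norm_tsum_smoothNumbers_sub_tsum_lt (cf_summable hs)
    (cf_zero s) one_pos
  refine ⟨N₀, fun N hN => ?_⟩
  have h2 := h N hN
  have hL : ∑' n, cf s n ≤ 1 := (cf_summable hs).tsum_le_of_sum_range_le (cf_partial_le_one hs)
  rw [Real.norm_eq_abs] at h2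
  have := abs_lt.mp h2
  linarith [this.1]

lemma harmonic_le_tsum_smooth {s : ℝ} (hs : 1 < s) (N : ℕ) :
    ∑ n ∈ range N, zf s n ≤ ∑' m : (Nat.smoothNumbers N), zf s (m : ℕ) := by
  rw [_root_.tsum_subtype]
  have hsum : Summable ((Nat.smoothNumbers N).indicator (⇑(zf s))) :=
    (zf_summable hs).indicator _
  have step : ∑ n ∈ range N, zf s n
      = ∑ n ∈ range N, (Nat.smoothNumbers N).indicator (⇑(zf s)) n := by
    refine Finset.sum_congr rfl fun n hn => ?_
    rcases Nat.eq_zero_or_pos n with rfl | hn0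
    · rw [zf_zero (by linarith), Set.indicator_apply]
      split <;> simp [zf_zero (show s ≠ 0 by linarith)]
    · rw [Set.indicator_of_mem]
      exact Nat.mem_smoothNumbers.mpr ⟨by omega, fun p hp =>
        lt_of_le_of_lt (Nat.le_of_mem_primeFactorsList hp) (mem_range.mp hn)⟩
  rw [step]
  exact hsum.sum_le_tsum (range N) (fun i _ => Set.indicator_apply_nonneg fun _ => zf_nonneg s i)

lemma one_sub_zf_pos {s : ℝ} (hs : 1 < s) {p : ℕ} (hp : p.Prime) :
    ((p:ℝ)^s)⁻¹ ≤ 1/(p:ℝ) ∧ (0:ℝ) < 1 - ((p:ℝ)^s)⁻¹ := by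
  have hp2 : (2:ℝ) ≤ (p:ℝ) := by exact_mod_cast hp.two_le
  have hppos : (0:ℝ) < (p:ℝ) := by linarith
  have h1 : (p:ℝ) ≤ (p:ℝ)^s := by
    conv_lhs => rw [← Real.rpow_one (p:ℝ)]
    exact Real.rpow_le_rpow_of_exponent_le (by linarith) (le_of_lt hs)
  have hpow : (0:ℝ) < (p:ℝ)^s := Real.rpow_pos_of_pos hppos s
  constructor
  · rw [one_div]
    exact inv_anti₀ hppos h1
  · have : ((p:ℝ)^s)⁻¹ ≤ (p:ℝ)⁻¹ := inv_anti₀ hppos h1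
    have : ((p:ℝ)^s)⁻¹ ≤ 1/2 := by
      rw [one_div]
      refine le_trans this ?_
      exact inv_anti₀ (by norm_num) hp2
    linarith

lemma ratio_bound {s : ℝ} (hs : 1 < s) {p : ℕ} (hp : p.Prime) :
    (1 - zf s p)⁻¹ ≤ (1 - cf s p)⁻¹ *
      ((if p = 2 then 2 else 1) * Real.exp (3 * (if p % 4 = 3 then (1/(p:ℝ)) else 0))) := by
  obtain ⟨hxle, hxpos⟩ := one_sub_zf_pos hs hp
  set x := ((p:ℝ)^s)⁻¹ with hx
  have hx0 : (0:ℝ) < x := by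
    rw [hx]
    have : (0:ℝ) < (p:ℝ) := by exact_mod_cast hp.pos
    positivity
  have hzf : zf s p = x := rfl
  have hx12 : x ≤ 1/2 := by
    have hp2 : (1:ℝ)/(p:ℝ) ≤ 1/2 := by
      rw [div_le_div_iff₀ (by exact_mod_cast hp.pos) (by norm_num)]
      have := hp.two_le
      push_cast
      nlinarith [hp.two_le, (show (2:ℝ) ≤ (p:ℝ) by exact_mod_cast hp.two_le)]
    linarith
  rcases eq_or_ne p 2 with rfl | hp2
  · have hcf : cf s 2 = 0 := by
      rw [cf_apply]
      norm_num [chi4]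
    have hval : (if (2:ℕ) = 2 then (2:ℝ) else 1) *
        Real.exp (3 * (if (2:ℕ) % 4 = 3 then (1/((2:ℕ):ℝ)) else 0)) = 2 := by
      norm_num
    rw [hzf, hcf, hval, sub_zero, inv_one, one_mul]
    have h2 : (1-x)⁻¹ ≤ ((1:ℝ)/2)⁻¹ := inv_anti₀ (by norm_num) (by linarith)
    simpa using h2
  · have hodd : p % 2 = 1 := hp.eq_two_or_odd.resolve_left hp2
    rw [if_neg hp2, one_mul]
    rcases (by omega : p % 4 = 1 ∨ p % 4 = 3) with h4 | h4
    · have hcf : cf s p = x := by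
        rw [cf_apply, hx]
        simp [chi4, h4]
      rw [hzf, hcf, if_neg (by omega)]
      rw [mul_zero, Real.exp_zero, mul_one]
    · have hcf : cf s p = -x := by
        rw [cf_apply, hx]
        simp [chi4, h4, if_neg (by omega : ¬ p % 4 = 1)]
      rw [hzf, hcf, if_pos h4, sub_neg_eq_add]
      have hp3 : (3:ℝ) ≤ (p:ℝ) := by
        have : 3 ≤ p := by omega
        exact_mod_cast this
      have hx13 : x ≤ 1/3 := le_trans hxle (by
        rw [div_le_div_iff₀ (by linarith) (by norm_num)]
        linarith)
      have h1px : (0:ℝ) < 1 + x := by linarith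
      have key1 : (1 - x)⁻¹ ≤ (1 + x)⁻¹ * (1 + 3*x) := by
        rw [inv_eq_one_div, inv_eq_one_div, div_mul_eq_mul_div, one_mul,
          div_le_div_iff₀ (by linarith) (by linarith)]
        nlinarith
      refine le_trans key1 ?_
      have key2 : 1 + 3*x ≤ Real.exp (3 * (1/(p:ℝ))) := by
        have h3x : 1 + 3*x ≤ Real.exp (3*x) := by
          have := Real.add_one_le_exp (3*x)
          linarith
        refine le_trans h3x (Real.exp_le_exp.mpr ?_)
        have : x ≤ 1/(p:ℝ) := hxle
        linarith
      have : (0:ℝ) ≤ (1+x)⁻¹ := by positivity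
      nlinarith


lemma prod_aux_le {C : ℝ} (hC0 : 0 ≤ C)
    (hC : ∀ P : Finset ℕ, (∀ p ∈ P, p.Prime ∧ p % 4 = 3) → ∑ p ∈ P, (1/(p:ℝ)) ≤ C)
    (N : ℕ) :
    ∏ p ∈ N.primesBelow, ((if p = 2 then (2:ℝ) else 1) *
      Real.exp (3 * (if p % 4 = 3 then (1/(p:ℝ)) else 0))) ≤ 2 * Real.exp (3 * C) := by
  rw [Finset.prod_mul_distrib]
  have h1 : ∏ p ∈ N.primesBelow, (if p = 2 then (2:ℝ) else 1) ≤ 2 := by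
    rw [Finset.prod_ite_eq' N.primesBelow 2 (fun _ => (2:ℝ))]
    split <;> norm_num
  have h2 : ∏ p ∈ N.primesBelow, Real.exp (3 * (if p % 4 = 3 then (1/(p:ℝ)) else 0))
      ≤ Real.exp (3 * C) := by
    rw [← Real.exp_sum]
    apply Real.exp_le_exp.mpr
    rw [← Finset.mul_sum]
    have hsum : ∑ p ∈ N.primesBelow, (if p % 4 = 3 then (1/(p:ℝ)) else 0)
        = ∑ p ∈ N.primesBelow.filter (fun p => p % 4 = 3), (1/(p:ℝ)) :=
      (Finset.sum_filter _ _).symm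
    rw [hsum]
    have := hC (N.primesBelow.filter (fun p => p % 4 = 3)) (by
      intro p hp
      rw [Finset.mem_filter, Nat.mem_primesBelow] at hp
      exact ⟨hp.1.2, hp.2⟩)
    nlinarith
  have hpos1 : (0:ℝ) ≤ ∏ p ∈ N.primesBelow, (if p = 2 then (2:ℝ) else 1) := by
    apply Finset.prod_nonneg
    intro p _
    split <;> norm_num
  have hpos2 : (0:ℝ) ≤ ∏ p ∈ N.primesBelow, Real.exp (3 * (if p % 4 = 3 then (1/(p:ℝ)) else 0)) := by
    apply Finset.prod_nonneg
    intro p _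
    positivity
  nlinarith [Real.exp_pos (3 * C)]

lemma sum_zf_le {C : ℝ} (hC0 : 0 ≤ C)
    (hC : ∀ P : Finset ℕ, (∀ p ∈ P, p.Prime ∧ p % 4 = 3) → ∑ p ∈ P, (1/(p:ℝ)) ≤ C)
    {s : ℝ} (hs : 1 < s) :
    ∃ N₀, ∀ N ≥ N₀, ∑ n ∈ range N, zf s n ≤ 4 * Real.exp (3 * C) := by
  obtain ⟨N₀, hN₀⟩ := tsum_smooth_cf_le hs
  refine ⟨N₀, fun N hN => ?_⟩
  have step1 : ∑ n ∈ range N, zf s n ≤ ∑' m : (Nat.smoothNumbers N), zf s (m : ℕ) :=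
    harmonic_le_tsum_smooth hs N
  have step2 : ∑' m : (Nat.smoothNumbers N), zf s (m : ℕ)
      = ∏ p ∈ N.primesBelow, (1 - zf s p)⁻¹ :=
    (EulerProduct.prod_primesBelow_geometric_eq_tsum_smoothNumbers (zf_summable hs) N).symm
  have step3 : ∏ p ∈ N.primesBelow, (1 - zf s p)⁻¹
      ≤ ∏ p ∈ N.primesBelow, ((1 - cf s p)⁻¹ * ((if p = 2 then (2:ℝ) else 1) *
          Real.exp (3 * (if p % 4 = 3 then (1/(p:ℝ)) else 0)))) := by
    apply Finset.prod_le_prod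
    · intro p hp
      have hpp := (Nat.mem_primesBelow.mp hp).2
      have := (one_sub_zf_pos hs hpp).2
      have hzf : zf s p = ((p:ℝ)^s)⁻¹ := rfl
      rw [hzf]
      positivity
    · intro p hp
      exact ratio_bound hs (Nat.mem_primesBelow.mp hp).2
  have step4 : ∏ p ∈ N.primesBelow, ((1 - cf s p)⁻¹ * ((if p = 2 then (2:ℝ) else 1) *
          Real.exp (3 * (if p % 4 = 3 then (1/(p:ℝ)) else 0))))
      = (∏ p ∈ N.primesBelow, (1 - cf s p)⁻¹) *
        ∏ p ∈ N.primesBelow, ((if p = 2 then (2:ℝ) else 1) *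
          Real.exp (3 * (if p % 4 = 3 then (1/(p:ℝ)) else 0))) :=
    Finset.prod_mul_distrib
  have step5 : ∏ p ∈ N.primesBelow, (1 - cf s p)⁻¹
      = ∑' m : (Nat.smoothNumbers N), cf s (m : ℕ) :=
    EulerProduct.prod_primesBelow_geometric_eq_tsum_smoothNumbers (cf_summable hs) N
  have hG := prod_aux_le hC0 hC N
  have hGnonneg : (0:ℝ) ≤ ∏ p ∈ N.primesBelow, ((if p = 2 then (2:ℝ) else 1) *
      Real.exp (3 * (if p % 4 = 3 then (1/(p:ℝ)) else 0))) := by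
    apply Finset.prod_nonneg
    intro p _
    have : (0:ℝ) ≤ (if p = 2 then (2:ℝ) else 1) := by split <;> norm_num
    positivity
  have hT := hN₀ N hN
  calc ∑ n ∈ range N, zf s n ≤ ∏ p ∈ N.primesBelow, (1 - zf s p)⁻¹ := step2 ▸ step1
  _ ≤ _ := step3
  _ = _ := step4
  _ = (∑' m : (Nat.smoothNumbers N), cf s (m : ℕ)) * _ := by rw [step5]
  _ ≤ 2 * (2 * Real.exp (3 * C)) := by nlinarith [Real.exp_pos (3*C)]
  _ = 4 * Real.exp (3 * C) := by ring

theorem div34 (C : ℝ) : ∃ P : Finset ℕ,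
    (∀ p ∈ P, p.Prime ∧ p % 4 = 3) ∧ C < ∑ p ∈ P, (1/(p:ℝ)) := by
  by_contra h
  push_neg at h
  have hC0' : (0:ℝ) ≤ max C 0 := le_max_right _ _
  have hC : ∀ P : Finset ℕ, (∀ p ∈ P, p.Prime ∧ p % 4 = 3) → ∑ p ∈ P, (1/(p:ℝ)) ≤ max C 0 :=
    fun P hP => le_trans (h P hP) (le_max_left _ _)
  set C' := max C 0
  have hev := Filter.tendsto_atTop.mp Real.tendsto_sum_range_one_div_nat_succ_atTop
    (2 * (4 * Real.exp (3 * C')) + 2)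
  obtain ⟨N₁, hN₁⟩ := hev.exists
  -- choose s
  set e : ℝ := ((N₁:ℝ) + 1)⁻¹ with he
  have hepos : 0 < e := by positivity
  have hele : e ≤ 1 := by
    rw [he]
    rw [inv_le_one_iff₀]
    right
    have : (0:ℝ) ≤ (N₁:ℝ) := Nat.cast_nonneg _
    linarith
  set sx : ℝ := 1 + e with hsx
  have hs : 1 < sx := by rw [hsx]; linarith
  obtain ⟨N₀, hN₀⟩ := sum_zf_le hC0' hC hs
  set N := max N₀ (N₁ + 1) with hN
  have h1 : ∑ n ∈ range N, zf sx n ≤ 4 * Real.exp (3 * C') := hN₀ N (le_max_left _ _)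
  have h2 : ∑ n ∈ range (N₁ + 1), zf sx n ≤ ∑ n ∈ range N, zf sx n := by
    apply Finset.sum_le_sum_of_subset_of_nonneg
    · exact Finset.range_subset_range.mpr (le_max_right _ _)
    · intro i _ _
      exact zf_nonneg _ _
  have h3 : ∑ n ∈ range (N₁ + 1), zf sx n = ∑ i ∈ range N₁, zf sx (i + 1) + zf sx 0 :=
    Finset.sum_range_succ' _ _
  have hz0 : zf sx 0 = 0 := zf_zero (by linarith)
  -- pointwise lower bound
  have hpt : ∀ i ∈ range N₁, (1/2) * (1/((i:ℝ) + 1)) ≤ zf sx (i + 1) := by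
    intro i hi
    rw [mem_range] at hi
    have hn1 : (1:ℝ) ≤ ((i:ℝ) + 1) := by
      have : (0:ℝ) ≤ (i:ℝ) := Nat.cast_nonneg _
      linarith
    have hcast : (((i + 1 : ℕ)):ℝ) = (i:ℝ) + 1 := by push_cast; ring
    have hnpos : (0:ℝ) < ((i:ℝ) + 1) := by linarith
    -- (i+1)^e ≤ 2
    have hle2pow : ((i:ℝ) + 1) ≤ (2:ℝ) ^ ((N₁ + 1 : ℕ)) := by
      have hi2 : (i + 1 : ℕ) ≤ 2 ^ (N₁ + 1) := by
        have := Nat.lt_two_pow_self (n := N₁)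
        have h2 : 2 ^ N₁ ≤ 2 ^ (N₁ + 1) := Nat.pow_le_pow_right (by norm_num) (by omega)
        omega
      calc ((i:ℝ) + 1) = (((i + 1 : ℕ)):ℝ) := hcast.symm
      _ ≤ (((2 ^ (N₁ + 1) : ℕ)):ℝ) := by exact_mod_cast hi2
      _ = (2:ℝ) ^ ((N₁ + 1 : ℕ)) := by push_cast; ring
    have hpe : ((i:ℝ) + 1) ^ e ≤ 2 := by
      calc ((i:ℝ) + 1) ^ e ≤ ((2:ℝ) ^ ((N₁ + 1 : ℕ))) ^ e :=
        Real.rpow_le_rpow (by linarith) hle2pow (le_of_lt hepos)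
      _ = (2:ℝ) ^ (((N₁ + 1 : ℕ)) * e : ℝ) := by
        rw [← Real.rpow_natCast 2 (N₁ + 1), ← Real.rpow_mul (by norm_num)]
      _ = 2 := by
        have : (((N₁ + 1 : ℕ)):ℝ) * e = 1 := by
          rw [he]
          push_cast
          field_simp
        rw [this, Real.rpow_one]
    have hrs : ((i:ℝ) + 1) ^ sx = ((i:ℝ) + 1) * ((i:ℝ) + 1) ^ e := by
      rw [hsx, Real.rpow_add hnpos, Real.rpow_one]
    have hub : ((i:ℝ) + 1) ^ sx ≤ 2 * ((i:ℝ) + 1) := by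
      rw [hrs]
      nlinarith [Real.rpow_nonneg (le_of_lt hnpos) e]
    have hzfv : zf sx (i + 1) = ((((i + 1 : ℕ)):ℝ) ^ sx)⁻¹ := rfl
    rw [hzfv, hcast]
    have hpowpos : (0:ℝ) < ((i:ℝ) + 1) ^ sx := Real.rpow_pos_of_pos hnpos _
    have heq : (1:ℝ)/2 * (1/((i:ℝ) + 1)) = (2 * ((i:ℝ) + 1))⁻¹ := by
      rw [mul_inv]
      ring
    rw [heq]
    exact inv_anti₀ hpowpos hub
  have h4 : (1/2) * ∑ i ∈ range N₁, (1/((i:ℝ) + 1)) ≤ ∑ i ∈ range N₁, zf sx (i + 1) := by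
    rw [Finset.mul_sum]
    exact Finset.sum_le_sum hpt
  have h5 : 2 * (4 * Real.exp (3 * C')) + 2 ≤ ∑ i ∈ range N₁, (1/((i:ℝ) + 1)) := by
    convert hN₁ using 2
  have := Real.exp_pos (3 * C')
  linarith

lemma density_zero (S2 : Set ℕ)
    (hS2 : ∀ n ∈ S2, ∃ a b : ℤ, (n : ℤ) = a ^ 2 + b ^ 2) :
    Filter.Tendsto (fun M : ℕ => (({n : ℕ | n ∈ S2 ∧ n ≤ M}.ncard : ℝ)) / (M : ℝ))
      Filter.atTop (nhds 0) := by
  classical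
  rw [Metric.tendsto_atTop]
  intro ε hε
  obtain ⟨P, hP, hPsum⟩ := div34 (2 * Real.log (2/ε))
  have hPprime : ∀ p ∈ P, p.Prime := fun p hp => (hP p hp).1
  set B : ℕ := ∏ p ∈ P, p^2 with hB
  set G : ℕ := ∏ p ∈ P, (p^2 - (p-1)) with hG
  have hBpos : 0 < B := Finset.prod_pos (fun p hp => pow_pos (hPprime p hp).pos 2)
  -- ratio bound
  have hfac : ∀ p ∈ P, ((p^2 - (p-1) : ℕ) : ℝ) ≤ ((p:ℝ)^2) * Real.exp (-(1/(2*(p:ℝ)))) := by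
    intro p hp
    have hp2 : 2 ≤ p := (hPprime p hp).two_le
    have hple : p - 1 ≤ p^2 := le_trans (Nat.sub_le p 1) (Nat.le_self_pow two_ne_zero p)
    have hcast : ((p^2 - (p-1) : ℕ) : ℝ) = (p:ℝ)^2 - ((p:ℝ) - 1) := by
      rw [Nat.cast_sub hple, Nat.cast_sub (by omega)]
      push_cast
      ring
    rw [hcast]
    have hppos : (0:ℝ) < (p:ℝ) := by exact_mod_cast (hPprime p hp).pos
    have hpR : (2:ℝ) ≤ (p:ℝ) := by exact_mod_cast hp2
    -- 1 - (p-1)/p² ≤ exp(-(p-1)/p²) ≤ exp(-1/(2p))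
    have h1 : (p:ℝ)^2 - ((p:ℝ) - 1) = ((p:ℝ)^2) * (1 - ((p:ℝ)-1)/((p:ℝ)^2)) := by
      field_simp
    rw [h1]
    have h2 : 1 - ((p:ℝ)-1)/((p:ℝ)^2) ≤ Real.exp (-(((p:ℝ)-1)/((p:ℝ)^2))) := by
      have := Real.add_one_le_exp (-(((p:ℝ)-1)/((p:ℝ)^2)))
      linarith
    have h3 : Real.exp (-(((p:ℝ)-1)/((p:ℝ)^2))) ≤ Real.exp (-(1/(2*(p:ℝ)))) := by
      apply Real.exp_le_exp.mpr
      rw [neg_le_neg_iff, div_le_div_iff₀ (by positivity) (by positivity)]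
      nlinarith
    nlinarith [Real.exp_pos (-(((p:ℝ)-1)/((p:ℝ)^2))), sq_nonneg ((p:ℝ))]
  have hGB : (G:ℝ) ≤ (B:ℝ) * Real.exp (-(1/2) * ∑ p ∈ P, (1/(p:ℝ))) := by
    have h1 : (G:ℝ) = ∏ p ∈ P, ((p^2 - (p-1) : ℕ) : ℝ) := by
      rw [hG]; push_cast; rfl
    have h2 : (G:ℝ) ≤ ∏ p ∈ P, (((p:ℝ)^2) * Real.exp (-(1/(2*(p:ℝ))))) := by
      rw [h1]
      exact Finset.prod_le_prod (fun p _ => Nat.cast_nonneg _) hfac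
    have h3 : ∏ p ∈ P, (((p:ℝ)^2) * Real.exp (-(1/(2*(p:ℝ)))))
        = (∏ p ∈ P, ((p:ℝ)^2)) * ∏ p ∈ P, Real.exp (-(1/(2*(p:ℝ)))) :=
      Finset.prod_mul_distrib
    have h4 : ∏ p ∈ P, Real.exp (-(1/(2*(p:ℝ)))) = Real.exp (∑ p ∈ P, -(1/(2*(p:ℝ)))) :=
      (Real.exp_sum _ _).symm
    have h5 : ∑ p ∈ P, -(1/(2*(p:ℝ))) = -(1/2) * ∑ p ∈ P, (1/(p:ℝ)) := by
      rw [Finset.mul_sum]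
      apply Finset.sum_congr rfl
      intro p hp
      rw [neg_mul, one_div_mul_one_div]
    have h6 : (∏ p ∈ P, ((p:ℝ)^2)) = (B:ℝ) := by rw [hB]; push_cast; rfl
    rw [h3, h4, h5, h6] at h2
    exact h2
  have hexp : Real.exp (-(1/2) * ∑ p ∈ P, (1/(p:ℝ))) < ε / 2 := by
    have h1 : -(1/2) * ∑ p ∈ P, (1/(p:ℝ)) < -(1/2) * (2 * Real.log (2/ε)) := by
      nlinarith
    have h2 : Real.exp (-(1/2) * (2 * Real.log (2/ε))) = ε/2 := by
      have : -(1/2) * (2 * Real.log (2/ε)) = -Real.log (2/ε) := by ring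
      rw [this, Real.exp_neg, Real.exp_log (by positivity)]
      rw [inv_div]
    calc Real.exp _ < Real.exp (-(1/2) * (2 * Real.log (2/ε))) := Real.exp_lt_exp.mpr h1
    _ = ε/2 := h2
  have hGBe : (G:ℝ)/(B:ℝ) < ε/2 := by
    rw [div_lt_iff₀ (by exact_mod_cast hBpos)]
    calc (G:ℝ) ≤ (B:ℝ) * Real.exp (-(1/2) * ∑ p ∈ P, (1/(p:ℝ))) := hGB
    _ < (B:ℝ) * (ε/2) := by
        have hBR : (0:ℝ) < (B:ℝ) := by exact_mod_cast hBpos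
        nlinarith
    _ = ε/2 * B := by ring
  set K : ℕ := ⌈(2*(G:ℝ))/ε⌉₊ + 1 with hK
  refine ⟨K, fun M hM => ?_⟩
  have hM1 : 1 ≤ M := by omega
  have hMR : (0:ℝ) < (M:ℝ) := by exact_mod_cast hM1
  -- the count
  set F : Finset ℕ := (Finset.range (M+1)).filter (fun n => n ∈ S2) with hF
  have hsetF : {n : ℕ | n ∈ S2 ∧ n ≤ M} = (↑F : Set ℕ) := by
    ext n
    simp only [Set.mem_setOf_eq, hF, Finset.coe_filter, Finset.mem_range, Nat.lt_succ_iff]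
    tauto
  have hcount : F.card ≤ (M / B + 1) * G := by
    apply main_count hPprime M F
    intro n hn
    rw [hF, Finset.mem_filter, Finset.mem_range, Nat.lt_succ_iff] at hn
    refine ⟨hn.1, ?_⟩
    intro p hp hdvd
    obtain ⟨a, b, hab⟩ := hS2 n hn.2
    exact sq_dvd_of_dvd_sq_add_sq (hPprime p hp) (hP p hp).2 hab hdvd
  -- real estimate
  have hcastdiv : ((M / B : ℕ) : ℝ) ≤ (M:ℝ)/(B:ℝ) := Nat.cast_div_le
  have hcR : ((F.card : ℝ)) ≤ ((M:ℝ)/(B:ℝ) + 1) * (G:ℝ) := by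
    calc ((F.card : ℝ)) ≤ (((M / B + 1) * G : ℕ) : ℝ) := by exact_mod_cast hcount
    _ = (((M/B : ℕ):ℝ) + 1) * (G:ℝ) := by push_cast; ring
    _ ≤ ((M:ℝ)/(B:ℝ) + 1) * (G:ℝ) := by
        apply mul_le_mul_of_nonneg_right _ (Nat.cast_nonneg _)
        linarith
  have hGM : (G:ℝ)/(M:ℝ) < ε/2 := by
    rw [div_lt_iff₀ hMR]
    have h1 : ((2*(G:ℝ))/ε) ≤ (⌈(2*(G:ℝ))/ε⌉₊ : ℝ) := Nat.le_ceil _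
    have h2 : ((K:ℕ):ℝ) ≤ (M:ℝ) := by exact_mod_cast hM
    have h3 : ((K:ℕ):ℝ) = (⌈(2*(G:ℝ))/ε⌉₊ : ℝ) + 1 := by rw [hK]; push_cast; ring
    have h4 : (2*(G:ℝ))/ε < (M:ℝ) := by linarith
    rw [div_lt_iff₀ hε] at h4
    nlinarith
  have hfinal : ((F.card : ℝ))/(M:ℝ) < ε := by
    rw [div_lt_iff₀ hMR]
    have hBR : (0:ℝ) < (B:ℝ) := by exact_mod_cast hBpos
    have key : ((M:ℝ)/(B:ℝ) + 1) * (G:ℝ) = ((G:ℝ)/(B:ℝ)) * (M:ℝ) + (G:ℝ) := by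
      field_simp
    have hG2 : (G:ℝ) < (ε/2) * M := by
      rw [div_lt_iff₀ hMR] at hGM
      linarith
    calc ((F.card : ℝ)) ≤ ((M:ℝ)/(B:ℝ) + 1) * (G:ℝ) := hcR
    _ = ((G:ℝ)/(B:ℝ)) * (M:ℝ) + (G:ℝ) := key
    _ < (ε/2) * M + (ε/2) * M := by nlinarith
    _ = ε * M := by ring
  rw [hsetF, Set.ncard_coe_finset]
  rw [Real.dist_eq, sub_zero, abs_of_nonneg (by positivity)]
  exact hfinal


/-- The squared-minima set `𝔐` of full-rank well-rounded sublattices of `ℤ²` equals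
the set of positive integers representable as a sum of two integer squares, and it
has asymptotic density 0. -/
theorem stmt7 :
    minSet = {n : ℕ | 0 < n ∧ ∃ a b : ℤ, (n : ℤ) = a ^ 2 + b ^ 2} ∧
    Filter.Tendsto (fun M : ℕ => (({n : ℕ | n ∈ minSet ∧ n ≤ M}.ncard : ℝ)) / (M : ℝ))
      Filter.atTop (nhds 0) := by
  refine ⟨minSet_eq, ?_⟩
  apply density_zero
  intro n hn
  rw [minSet_eq] at hn
  exact hn.2

end AuxStmt7
end

section
/- Let ν be a real number with 1 < ν ≤ 3^{1/4}, let t ≥ 2 be an integer, and suppose d₁ and d₂ are positive divisors of t with √t/ν ≤ d₁ ≤ √t and √t/ν ≤ d₂ ≤ √t. Then gcd(d₁, d₂) > 1. -/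
/-!
If `d₁` and `d₂` were coprime, `d₁ * d₂` would be a divisor of `t`; the lower bounds give
`d₁ * d₂ ≥ t / ν² > t / 2` because `ν⁴ ≤ 3 < 4`, so `d₁ * d₂ = t`. The upper bounds
`d₁, d₂ ≤ √t` then force `d₁ = d₂`, and a number coprime to itself is `1`, so `t = 1`.
-/

lemma sq_lt_two_of_le_rpow_quarter {ν : ℝ} (h0 : 0 ≤ ν) (h : ν ≤ (3 : ℝ) ^ ((1 : ℝ) / 4)) :
    ν ^ 2 < 2 := by
  have h4 : ν ^ 4 ≤ 3 :=
    calc ν ^ 4 ≤ ((3 : ℝ) ^ ((1 : ℝ) / 4)) ^ 4 := by gcongr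
      _ = 3 := by rw [← Real.rpow_natCast, ← Real.rpow_mul (by norm_num)]; norm_num
  nlinarith [sq_nonneg (ν ^ 2)]

lemma lt_two_mul_of_sqrt_div_le {ν t a b : ℝ} (hν : 0 < ν) (hν2 : ν ^ 2 < 2) (ht : 0 < t)
    (ha : √t / ν ≤ a) (hb : √t / ν ≤ b) : t < 2 * (a * b) := by
  have hprod : t / ν ^ 2 ≤ a * b :=
    calc t / ν ^ 2 = (√t / ν) * (√t / ν) := by
          rw [div_mul_div_comm, Real.mul_self_sqrt ht.le, sq]
      _ ≤ a * b := mul_le_mul ha hb (by positivity) ((by positivity : 0 ≤ √t / ν).trans ha)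
  have : t / 2 < t / ν ^ 2 := div_lt_div_of_pos_left ht (by positivity) hν2
  linarith

lemma Nat.eq_of_mul_eq_of_sq_le {a b n : ℕ} (h : a * b = n) (ha : a ^ 2 ≤ n)
    (hb : b ^ 2 ≤ n) : a = b :=
  le_antisymm (by by_contra! hlt; nlinarith) (by by_contra! hlt; nlinarith)

lemma Nat.sq_le_of_le_sqrt {d n : ℕ} (h : (d : ℝ) ≤ √n) : d ^ 2 ≤ n := by
  exact_mod_cast (Real.le_sqrt (Nat.cast_nonneg d) (Nat.cast_nonneg n)).1 h

theorem stmt8_general (ν : ℝ) (hν1 : 1 < ν) (hν2 : ν ≤ (3 : ℝ) ^ ((1 : ℝ)/4))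
    (t : ℕ) (ht : 2 ≤ t) (d₁ d₂ : ℕ)
    (hd₁ : d₁ ∣ t) (hd₂ : d₂ ∣ t)
    (hl₁ : Real.sqrt t / ν ≤ (d₁ : ℝ)) (hu₁ : (d₁ : ℝ) ≤ Real.sqrt t)
    (hl₂ : Real.sqrt t / ν ≤ (d₂ : ℝ)) (hu₂ : (d₂ : ℝ) ≤ Real.sqrt t) :
    1 < Nat.gcd d₁ d₂ := by
  have hν0 : 0 < ν := one_pos.trans hν1
  have hlt : t < 2 * (d₁ * d₂) := by
    exact_mod_cast lt_two_mul_of_sqrt_div_le hν0 (sq_lt_two_of_le_rpow_quarter hν0.le hν2)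
      (by positivity) hl₁ hl₂
  have hgcd : Nat.gcd d₁ d₂ ≠ 0 := by
    rw [Ne, Nat.gcd_eq_zero_iff]
    rintro ⟨rfl, -⟩
    simp at hlt
  by_contra hle
  have hcop : Nat.Coprime d₁ d₂ := by unfold Nat.Coprime; omega
  have hprod : d₁ * d₂ = t :=
    (Nat.eq_of_dvd_of_lt_two_mul (by omega) (hcop.mul_dvd_of_dvd_of_dvd hd₁ hd₂) hlt).symm
  obtain rfl := Nat.eq_of_mul_eq_of_sq_le hprod (Nat.sq_le_of_le_sqrt hu₁)
    (Nat.sq_le_of_le_sqrt hu₂)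
  rw [(Nat.coprime_self d₁).1 hcop] at hprod
  omega

/-- If `1 < ν ≤ 3^{1/4}`, `t ≥ 2`, and `d₁, d₂` are positive divisors of `t` lying in
the interval `[√t/ν, √t]`, then `gcd(d₁, d₂) > 1`. -/
theorem stmt8 (ν : ℝ) (hν1 : 1 < ν) (hν2 : ν ≤ (3 : ℝ) ^ ((1 : ℝ)/4))
    (t : ℕ) (ht : 2 ≤ t) (d₁ d₂ : ℕ) (hd₁pos : 0 < d₁) (hd₂pos : 0 < d₂)
    (hd₁ : d₁ ∣ t) (hd₂ : d₂ ∣ t)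
    (hl₁ : Real.sqrt t / ν ≤ (d₁ : ℝ)) (hu₁ : (d₁ : ℝ) ≤ Real.sqrt t)
    (hl₂ : Real.sqrt t / ν ≤ (d₂ : ℝ)) (hu₂ : (d₂ : ℝ) ≤ Real.sqrt t) :
    1 < Nat.gcd d₁ d₂ :=
  stmt8_general ν hν1 hν2 t ht d₁ d₂ hd₁ hd₂ hl₁ hu₁ hl₂ hu₂
end

section
/- Let ν be a real number with 1 < ν ≤ 3^{1/4} and let t ≥ 2 be an integer. Then β_ν(t) ≤ ⌊((ν−1)/(ν·p(t)))·√t⌋ + 1, where p(t) denotes the smallest prime divisor of t. -/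
/-!
Two divisors `a < b` of `t` in `[√t/ν, √t]` satisfy `ab < t ≤ ν²ab < 2ab`, so `ab ∤ t` and `a, b`
are not coprime. Hence `p(t) ≤ gcd a b ≤ b - a`: these divisors are `p(t)`-separated, and at most
`⌊L / p(t)⌋ + 1` of them fit into an interval of length `L = √t - √t/ν = ((ν - 1)/ν) √t`.
-/

/-- `β_ν(t)`: the number of positive divisors of `t` in the interval `[√t/ν, √t]`. -/
noncomputable def betaNu (ν : ℝ) (t : ℕ) : ℕ :=
  {d : ℕ | 0 < d ∧ d ∣ t ∧ Real.sqrt t / ν ≤ (d : ℝ) ∧ (d : ℝ) ≤ Real.sqrt t}.ncard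

theorem Nat.add_minFac_le_of_dvd_of_lt {a b t : ℕ} (hab : a < b) (ha : a ∣ t) (hb : b ∣ t)
    (hlt : a * b < t) (hlt' : t < 2 * (a * b)) : a + t.minFac ≤ b := by
  have hgcd : Nat.gcd a b ≠ 1 := by
    intro hcop
    obtain ⟨q, hq⟩ := Nat.Coprime.mul_dvd_of_dvd_of_dvd hcop ha hb
    subst hq
    have hq1 : 1 < q :=
      lt_of_mul_lt_mul_left (by linarith : a * b * 1 < a * b * q) (Nat.zero_le _)
    have hq2 : q < 2 :=
      lt_of_mul_lt_mul_left (by linarith : a * b * q < a * b * 2) (Nat.zero_le _)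
    omega
  have hgcd_pos : 0 < Nat.gcd a b := Nat.gcd_pos_of_pos_right a (by omega)
  have hminFac : t.minFac ≤ Nat.gcd a b :=
    Nat.minFac_le_of_dvd (by omega) ((Nat.gcd_dvd_left a b).trans ha)
  have hsub : Nat.gcd a b ≤ b - a :=
    Nat.le_of_dvd (by omega) (Nat.dvd_sub (Nat.gcd_dvd_right a b) (Nat.gcd_dvd_left a b))
  omega

theorem Set.ncard_le_floor_div_add_one_of_separated {S : Set ℕ} {x y : ℝ} {p : ℕ} (hp : 0 < p)
    (hxy : x ≤ y) (hS : ∀ d ∈ S, x ≤ d ∧ (d : ℝ) ≤ y)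
    (hsep : ∀ a ∈ S, ∀ b ∈ S, a < b → a + p ≤ b) :
    (S.ncard : ℤ) ≤ ⌊(y - x) / p⌋ + 1 := by
  have hpR : (0 : ℝ) < p := by exact_mod_cast hp
  set n := ⌊(y - x) / p⌋
  have hn : 0 ≤ n := Int.floor_nonneg.mpr (div_nonneg (by linarith) hpR.le)
  let f : ℕ → ℤ := fun d => ⌊((d : ℝ) - x) / p⌋
  have hmaps : ∀ d ∈ S, f d ∈ (Finset.Icc 0 n : Set ℤ) := by
    intro d hd
    rw [Finset.coe_Icc, Set.mem_Icc]
    exact ⟨Int.floor_nonneg.mpr (div_nonneg (by linarith [hS d hd]) hpR.le),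
      Int.floor_mono (by gcongr; exact (hS d hd).2)⟩
  have hmono : StrictMonoOn f S := by
    intro a ha b hb hab
    have hstep : ((a : ℝ) - x) / p + 1 ≤ ((b : ℝ) - x) / p := by
      have : (a : ℝ) + p ≤ b := by exact_mod_cast hsep a ha b hb hab
      rw [div_add_one hpR.ne', div_le_div_iff_of_pos_right hpR]
      linarith
    have := Int.floor_mono hstep
    rw [Int.floor_add_one] at this
    simp only [f]
    omega
  have hcard := Set.ncard_le_ncard_of_injOn f hmaps hmono.injOn (Finset.finite_toSet _)
  rw [Set.ncard_coe_finset, Int.card_Icc] at hcard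
  omega

theorem sq_lt_two_of_le_rpow_quarter_s9 {ν : ℝ} (hν0 : 0 ≤ ν)
    (hν : ν ≤ (3 : ℝ) ^ ((1 : ℝ) / 4)) : ν ^ 2 < 2 := by
  have hpow : ν ^ 4 ≤ 3 := by
    calc ν ^ 4 ≤ ((3 : ℝ) ^ ((1 : ℝ) / 4)) ^ 4 := by gcongr
      _ = 3 := by rw [← Real.rpow_natCast, ← Real.rpow_mul (by norm_num)]; norm_num
  nlinarith [sq_nonneg ν]

def nearSqrtDivisors (ν : ℝ) (t : ℕ) : Set ℕ :=
  {d : ℕ | 0 < d ∧ d ∣ t ∧ √t / ν ≤ (d : ℝ) ∧ (d : ℝ) ≤ √t}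

theorem betaNu_eq_ncard (ν : ℝ) (t : ℕ) : betaNu ν t = (nearSqrtDivisors ν t).ncard := rfl

theorem add_minFac_le_of_mem_nearSqrtDivisors {ν : ℝ} (hν0 : 0 < ν) (hν : ν ^ 2 < 2)
    {t a b : ℕ} (ha : a ∈ nearSqrtDivisors ν t) (hb : b ∈ nearSqrtDivisors ν t) (hab : a < b) :
    a + t.minFac ≤ b := by
  obtain ⟨ha0, hat, hal, -⟩ := ha
  obtain ⟨-, hbt, hbl, hbu⟩ := hb
  have hsq : (√t) ^ 2 = t := Real.sq_sqrt (Nat.cast_nonneg t)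
  have hνa : √t ≤ ν * a := by rwa [div_le_iff₀ hν0, mul_comm] at hal
  have hνb : √t ≤ ν * b := by rwa [div_le_iff₀ hν0, mul_comm] at hbl
  have habR : (a : ℝ) < b := by exact_mod_cast hab
  have haR : (0 : ℝ) < a := by exact_mod_cast ha0
  refine Nat.add_minFac_le_of_dvd_of_lt hab hat hbt ?_ ?_
  · have : (a : ℝ) * b < t := by nlinarith
    exact_mod_cast this
  · have ht : (t : ℝ) ≤ ν ^ 2 * (a * b) := by nlinarith [Real.sqrt_nonneg t]
    have : (t : ℝ) < 2 * (a * b) := by nlinarith [mul_pos haR (haR.trans habR)]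
    exact_mod_cast this

theorem stmt9_general (ν : ℝ) (hν1 : 1 < ν) (hν2 : ν ≤ (3 : ℝ) ^ ((1 : ℝ)/4))
    (t : ℕ) :
    (betaNu ν t : ℤ) ≤ ⌊((ν - 1) / (ν * (t.minFac : ℝ))) * Real.sqrt t⌋ + 1 := by
  have hν0 : 0 < ν := one_pos.trans hν1
  have hsep : ∀ a ∈ nearSqrtDivisors ν t, ∀ b ∈ nearSqrtDivisors ν t,
      a < b → a + t.minFac ≤ b := fun _ ha _ hb hab =>
    add_minFac_le_of_mem_nearSqrtDivisors hν0 (sq_lt_two_of_le_rpow_quarter_s9 hν0.le hν2) ha hb hab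
  have hbound := Set.ncard_le_floor_div_add_one_of_separated (Nat.minFac_pos t)
    (div_le_self (Real.sqrt_nonneg t) hν1.le) (fun d hd => ⟨hd.2.2.1, hd.2.2.2⟩) hsep
  rw [betaNu_eq_ncard]
  convert hbound using 3
  field_simp

/-- For `1 < ν ≤ 3^{1/4}` and `t ≥ 2`,
`β_ν(t) ≤ ⌊((ν−1)/(ν·p(t)))·√t⌋ + 1`, where `p(t)` is the least prime factor of `t`. -/
theorem stmt9 (ν : ℝ) (hν1 : 1 < ν) (hν2 : ν ≤ (3 : ℝ) ^ ((1 : ℝ)/4))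
    (t : ℕ) (ht : 2 ≤ t) :
    (betaNu ν t : ℤ) ≤ ⌊((ν - 1) / (ν * (t.minFac : ℝ))) * Real.sqrt t⌋ + 1 :=
  stmt9_general ν hν1 hν2 t
end

section
/- Let ν be a real number with 1 < ν ≤ 3^{1/4} and let m < n be positive integers. Then: (1) if n > m√ν, or if n ≥ m√ν and √ν is irrational, then I_ν(n) ∩ I_ν(m) = ∅; (2) if gcd(m, n) = 1, then I_ν(n) ∩ I_ν(m) = ∅; (3) if m < n < m√ν, then |I_ν(n) ∩ I_ν(m)| ≤ ⌊((ν−1)/ν)·gcd(m, n)⌋ + 1. -/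
/-- `I_ν(n) = {n(n−i) : 0 ≤ i ≤ ⌊((ν−1)/ν)·n⌋}`. -/
def INu (ν : ℝ) (n : ℕ) : Set ℕ :=
  {k | ∃ i : ℕ, (i : ℝ) ≤ (ν - 1) / ν * (n : ℝ) ∧ k = n * (n - i)}

/-- Structure of membership in `INu`. -/
lemma INu_bounds (ν : ℝ) (hν1 : 1 < ν) (n : ℕ) (hn : 0 < n) {k : ℕ}
    (hk : k ∈ INu ν n) :
    ∃ i : ℕ, i < n ∧ k = n * (n - i) ∧ (n : ℝ) / ν ≤ ((n - i : ℕ) : ℝ) := by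
  obtain ⟨i, hi, hki⟩ := hk
  have hν0 : (0:ℝ) < ν := by linarith
  have hcn : (ν - 1) / ν * (n : ℝ) < n := by
    rw [div_mul_eq_mul_div, div_lt_iff₀ hν0]
    have hn' : (0:ℝ) < n := by exact_mod_cast hn
    nlinarith
  have hin : i < n := by
    have : (i : ℝ) < n := lt_of_le_of_lt hi hcn
    exact_mod_cast this
  refine ⟨i, hin, hki, ?_⟩
  have hcast : ((n - i : ℕ) : ℝ) = (n : ℝ) - i := by
    rw [Nat.cast_sub hin.le]
  rw [hcast, div_le_iff₀ hν0]
  have hi' : (i : ℝ) * ν ≤ (ν - 1) * (n : ℝ) := by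
    have := mul_le_mul_of_nonneg_right hi (le_of_lt hν0)
    calc (i:ℝ) * ν ≤ (ν - 1) / ν * (n:ℝ) * ν := this
      _ = (ν - 1) * n := by field_simp
  nlinarith

/-- For `1 < ν ≤ 3^{1/4}` and positive integers `m < n`:
(1) if `n > m√ν`, or `n ≥ m√ν` and `√ν` is irrational, then `I_ν(n) ∩ I_ν(m) = ∅`;
(2) if `gcd(m,n) = 1`, then `I_ν(n) ∩ I_ν(m) = ∅`;
(3) if `m < n < m√ν`, then `|I_ν(n) ∩ I_ν(m)| ≤ ⌊((ν−1)/ν)·gcd(m,n)⌋ + 1`. -/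
theorem stmt11 (ν : ℝ) (hν1 : 1 < ν) (hν2 : ν ≤ (3 : ℝ) ^ ((1 : ℝ)/4))
    (m n : ℕ) (hm : 0 < m) (hmn : m < n) :
    ((((m : ℝ) * Real.sqrt ν < (n : ℝ)) ∨
        ((m : ℝ) * Real.sqrt ν ≤ (n : ℝ) ∧ Irrational (Real.sqrt ν))) →
      INu ν n ∩ INu ν m = ∅) ∧
    (Nat.gcd m n = 1 → INu ν n ∩ INu ν m = ∅) ∧
    ((n : ℝ) < (m : ℝ) * Real.sqrt ν →
      ((INu ν n ∩ INu ν m).ncard : ℤ) ≤ ⌊(ν - 1) / ν * (Nat.gcd m n : ℝ)⌋ + 1) := by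
  have hν0 : (0:ℝ) < ν := by linarith
  have hn : 0 < n := hm.trans hmn
  refine ⟨?_, ?_, ?_⟩
  · -- Part 1
    intro h
    have hstrict : (m : ℝ) * Real.sqrt ν < n := by
      rcases h with h | ⟨hle, hirr⟩
      · exact h
      · rcases lt_or_eq_of_le hle with h' | h'
        · exact h'
        · exfalso
          apply hirr
          refine ⟨(n : ℚ) / (m : ℚ), ?_⟩
          have hm0 : (m : ℝ) ≠ 0 := by positivity
          push_cast
          field_simp at h' ⊢
          linarith [h']
    ext k
    simp only [Set.mem_inter_iff, Set.mem_empty_iff_false, iff_false, not_and]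
    intro hkn hkm
    obtain ⟨i, hin, hki, hlow⟩ := INu_bounds ν hν1 n hn hkn
    obtain ⟨j, hjm, hkj, _⟩ := INu_bounds ν hν1 m hm hkm
    have hsq : (m : ℝ) ^ 2 * ν < (n : ℝ) ^ 2 := by
      have h0 : (0:ℝ) ≤ (m : ℝ) * Real.sqrt ν := by positivity
      have := mul_self_lt_mul_self h0 hstrict
      have hs : Real.sqrt ν * Real.sqrt ν = ν := Real.mul_self_sqrt hν0.le
      nlinarith
    -- k ≥ n²/ν > m² ≥ k
    have hklow : (n : ℝ) ^ 2 / ν ≤ (k : ℝ) := by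
      have : (k : ℝ) = (n : ℝ) * ((n - i : ℕ) : ℝ) := by rw [hki]; push_cast; ring
      rw [this]
      have hn' : (0:ℝ) ≤ (n:ℝ) := by positivity
      calc (n:ℝ)^2 / ν = (n:ℝ) * ((n:ℝ)/ν) := by ring
        _ ≤ (n:ℝ) * ((n - i : ℕ) : ℝ) := by
            exact mul_le_mul_of_nonneg_left hlow hn'
    have hkup : (k : ℝ) ≤ (m : ℝ) ^ 2 := by
      have : (k : ℝ) = (m : ℝ) * ((m - j : ℕ) : ℝ) := by rw [hkj]; push_cast; ring
      rw [this]
      have : ((m - j : ℕ) : ℝ) ≤ (m : ℝ) := by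
        exact_mod_cast Nat.cast_le.mpr (Nat.sub_le m j)
      nlinarith [show (0:ℝ) ≤ (m:ℝ) by positivity]
    have : (m : ℝ) ^ 2 < (n : ℝ) ^ 2 / ν := (lt_div_iff₀ hν0).mpr (by nlinarith)
    linarith
  · -- Part 2
    intro hgcd
    ext k
    simp only [Set.mem_inter_iff, Set.mem_empty_iff_false, iff_false, not_and]
    intro hkn hkm
    obtain ⟨i, hin, hki, _⟩ := INu_bounds ν hν1 n hn hkn
    obtain ⟨j, hjm, hkj, _⟩ := INu_bounds ν hν1 m hm hkm
    have heq : n * (n - i) = m * (m - j) := by rw [← hki, ← hkj]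
    have hdvd : n ∣ m * (m - j) := ⟨n - i, heq.symm⟩
    have hcop : Nat.Coprime n m := Nat.coprime_comm.mp hgcd
    have hdvd2 : n ∣ (m - j) := hcop.dvd_of_dvd_mul_left hdvd
    have hle : n ≤ m - j := Nat.le_of_dvd (by omega) hdvd2
    omega
  · -- Part 3
    intro _
    set d := Nat.gcd m n with hd
    have hd0 : 0 < d := Nat.gcd_pos_of_pos_left n hm
    set m' := m / d with hm'
    set n' := n / d with hn'
    have hdm : d * m' = m := Nat.mul_div_cancel' (Nat.gcd_dvd_left m n)
    have hdn : d * n' = n := Nat.mul_div_cancel' (Nat.gcd_dvd_right m n)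
    have hcop : Nat.Coprime m' n' := Nat.coprime_div_gcd_div_gcd hd0
    have hm'0 : 0 < m' :=
      Nat.div_pos (Nat.le_of_dvd hm (Nat.gcd_dvd_left m n)) hd0
    have hn'0 : 0 < n' :=
      Nat.div_pos (Nat.le_of_dvd hn (Nat.gcd_dvd_right m n)) hd0
    have hm'n' : m' < n' := by
      by_contra hcon
      push_neg at hcon
      have : n ≤ m := by
        calc n = d * n' := hdn.symm
          _ ≤ d * m' := Nat.mul_le_mul_left d hcon
          _ = m := hdm
      omega
    set t₁ := ⌈(m : ℝ) / (ν * (n' : ℝ))⌉₊ with ht₁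
    set t₂ := ⌊(m : ℝ) / (n' : ℝ)⌋₊ with ht₂
    have hsub : INu ν n ∩ INu ν m ⊆
        ↑((Finset.Icc t₁ t₂).image (fun t => n * (m' * t))) := by
      rintro k ⟨hkn, hkm⟩
      obtain ⟨i, hin, hki, _⟩ := INu_bounds ν hν1 n hn hkn
      obtain ⟨j, hjm, hkj, hjlow⟩ := INu_bounds ν hν1 m hm hkm
      have heq : n * (n - i) = m * (m - j) := by rw [← hki, ← hkj]
      have heq' : n' * (n - i) = m' * (m - j) := by
        have : d * (n' * (n - i)) = d * (m' * (m - j)) := by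
          rw [← mul_assoc, ← mul_assoc, hdm, hdn]; exact heq
        exact Nat.eq_of_mul_eq_mul_left hd0 this
      have hdvd : n' ∣ m' * (m - j) := ⟨n - i, heq'.symm⟩
      have hdvd2 : n' ∣ (m - j) := (hcop.symm).dvd_of_dvd_mul_left hdvd
      obtain ⟨t, htm⟩ := hdvd2
      have hni : n - i = m' * t := by
        have : n' * (n - i) = n' * (m' * t) := by
          rw [heq', htm]; ring
        exact Nat.eq_of_mul_eq_mul_left hn'0 this
      -- t bounds
      have htub : t ≤ t₂ := by
        apply Nat.le_floor
        rw [le_div_iff₀ (by exact_mod_cast hn'0)]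
        have : (n' : ℝ) * t ≤ m := by
          have : n' * t ≤ m := by omega
          exact_mod_cast this
        linarith [this]
      have htlb : t₁ ≤ t := by
        rw [ht₁, Nat.ceil_le]
        rw [div_le_iff₀ (by positivity)]
        have h1 : (m : ℝ) / ν ≤ ((m - j : ℕ) : ℝ) := hjlow
        have h2 : ((m - j : ℕ) : ℝ) = (n' : ℝ) * t := by exact_mod_cast htm
        have : (m : ℝ) / ν ≤ (n' : ℝ) * t := by rw [← h2]; exact h1
        calc (m : ℝ) = (m : ℝ) / ν * ν := by field_simp
          _ ≤ (n' : ℝ) * t * ν := by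
              exact mul_le_mul_of_nonneg_right this hν0.le
          _ = (t : ℝ) * (ν * n') := by ring
      refine Finset.mem_coe.mpr (Finset.mem_image.mpr ⟨t, Finset.mem_Icc.mpr ⟨htlb, htub⟩, ?_⟩)
      rw [hki, hni]
    have hcard : (INu ν n ∩ INu ν m).ncard ≤ (Finset.Icc t₁ t₂).card := by
      calc (INu ν n ∩ INu ν m).ncard
          ≤ (↑((Finset.Icc t₁ t₂).image (fun t => n * (m' * t))) : Set ℕ).ncard :=
            Set.ncard_le_ncard hsub (Finset.finite_toSet _)
        _ = ((Finset.Icc t₁ t₂).image (fun t => n * (m' * t))).card :=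
            Set.ncard_coe_finset _
        _ ≤ (Finset.Icc t₁ t₂).card := Finset.card_image_le
    have hicc : (Finset.Icc t₁ t₂).card = t₂ + 1 - t₁ := Nat.card_Icc t₁ t₂
    have hcd0 : (0:ℝ) ≤ (ν - 1) / ν * (d : ℝ) := mul_nonneg (div_nonneg (by linarith) hν0.le) (Nat.cast_nonneg _)
    have hfl0 : (0:ℤ) ≤ ⌊(ν - 1) / ν * (d : ℝ)⌋ := Int.floor_nonneg.mpr hcd0
    by_cases ht : t₁ ≤ t₂
    · -- t₂ - t₁ ≤ (ν-1)/ν * d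
      have hreal : (t₂ : ℝ) - (t₁ : ℝ) ≤ (ν - 1) / ν * (d : ℝ) := by
        have h1 : (t₂ : ℝ) ≤ (m : ℝ) / (n' : ℝ) := Nat.floor_le (by positivity)
        have h2 : (m : ℝ) / (ν * (n' : ℝ)) ≤ (t₁ : ℝ) := Nat.le_ceil _
        have h3 : (m : ℝ) / (n' : ℝ) ≤ (d : ℝ) := by
          rw [div_le_iff₀ (by exact_mod_cast hn'0)]
          have : m ≤ d * n' := by
            calc m = d * m' := hdm.symm
              _ ≤ d * n' := Nat.mul_le_mul_left d hm'n'.le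
          exact_mod_cast this
        have key : (m : ℝ) / (n' : ℝ) - (m : ℝ) / (ν * (n' : ℝ))
            = (ν - 1) / ν * ((m : ℝ) / (n' : ℝ)) := by
          field_simp
        have hmn'0 : (0:ℝ) ≤ (m : ℝ) / (n' : ℝ) := by positivity
        have hc0 : (0:ℝ) ≤ (ν - 1)/ν := div_nonneg (by linarith) hν0.le
        nlinarith [mul_le_mul_of_nonneg_left h3 hc0]
      have hint : (t₂ : ℤ) - (t₁ : ℤ) ≤ ⌊(ν - 1) / ν * (d : ℝ)⌋ := by
        apply Int.le_floor.mpr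
        push_cast
        linarith
      have : ((t₂ + 1 - t₁ : ℕ) : ℤ) = (t₂ : ℤ) + 1 - t₁ := by omega
      calc ((INu ν n ∩ INu ν m).ncard : ℤ) ≤ ((t₂ + 1 - t₁ : ℕ) : ℤ) := by
            rw [← hicc]; exact_mod_cast hcard
        _ = (t₂ : ℤ) + 1 - t₁ := this
        _ ≤ ⌊(ν - 1) / ν * (d : ℝ)⌋ + 1 := by omega
    · have : t₂ + 1 - t₁ = 0 := by omega
      have hz : (INu ν n ∩ INu ν m).ncard = 0 := by omega
      rw [hz]
      omega
end

section
/- Let n be a positive integer, let q₁, …, q_n be distinct primes each congruent to 1 modulo 4, and let u = q₁²·q₂²···q_n². Then 𝒩(u) ≥ 3^n, where 𝒩(u) denotes the number of full-rank well-rounded sublattices of ℤ² with determinant u. Consequently, for every positive integer k there exist positive integers u with 𝒩(u) ≥ (log u)^k. -/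
/-- `𝒩(u)`: the number of full-rank well-rounded sublattices of `ℤ²` with
determinant (index in `ℤ²`) equal to `u`. -/
noncomputable def NWR (u : ℕ) : ℕ :=
  {Λ : AddSubgroup (Fin 2 → ℤ) | IsFullRank Λ ∧ IsWellRounded Λ ∧ Λ.index = u}.ncard

open Zsqrtd GaussianInt

noncomputable def gE : GaussianInt ≃+ (Fin 2 → ℤ) where
  toFun z := ![z.re, z.im]
  invFun v := ⟨v 0, v 1⟩
  left_inv z := by simp
  right_inv v := by funext i; fin_cases i <;> simp
  map_add' z w := by funext i; fin_cases i <;> simp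

@[simp] lemma gE_apply (z : GaussianInt) : gE z = ![z.re, z.im] := rfl
@[simp] lemma gE_symm_apply (v : Fin 2 → ℤ) : gE.symm v = ⟨v 0, v 1⟩ := rfl
@[simp] lemma gE_symm_gE (z : GaussianInt) : gE.symm (gE z) = z := by
  ext <;> simp
@[simp] lemma gE_gE_symm (v : Fin 2 → ℤ) : gE (gE.symm v) = v := by
  funext i; fin_cases i <;> simp

noncomputable def gB : Module.Basis (Fin 2) ℤ GaussianInt :=
  Module.Basis.ofEquivFun gE.toIntLinearEquiv

noncomputable instance : Module.Free ℤ GaussianInt := Module.Free.of_basis gB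
instance : Module.Finite ℤ GaussianInt := Module.Finite.of_basis gB

lemma algNorm_eq (α : GaussianInt) : (Algebra.norm ℤ α) = Zsqrtd.norm α := by
  rw [Algebra.norm_eq_matrix_det gB, Matrix.det_fin_two]
  simp [Algebra.leftMulMatrix_eq_repr_mul, gB, Module.Basis.ofEquivFun,
    Zsqrtd.norm_def, Zsqrtd.re_mul, Zsqrtd.im_mul,
    Pi.single_apply]

noncomputable def glat (α : GaussianInt) : AddSubgroup (Fin 2 → ℤ) :=
  (Ideal.span {α} : Ideal GaussianInt).toAddSubgroup.map gE.toAddMonoidHom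

lemma mem_glat (α : GaussianInt) (v : Fin 2 → ℤ) : v ∈ glat α ↔ α ∣ gE.symm v := by
  rw [glat, ← Ideal.mem_span_singleton]
  constructor
  · rintro ⟨w, hw, rfl⟩; simpa using hw
  · intro h
    refine ⟨gE.symm v, h, ?_⟩
    funext i; fin_cases i <;> simp

lemma glat_index (α : GaussianInt) : (glat α).index = (Zsqrtd.norm α).natAbs := by
  rw [glat, AddSubgroup.index_map_eq _ gE.surjective (by
    intro x hx
    have h0 : gE x = gE 0 := by rw [map_zero]; exact AddMonoidHom.mem_ker.mp hx
    have : x = 0 := gE.injective h0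
    simp [this])]
  have : (Ideal.span {α} : Ideal GaussianInt).toAddSubgroup.index
      = Ideal.absNorm (Ideal.span {α}) := rfl
  rw [this, Ideal.absNorm_span_singleton, algNorm_eq]

lemma normSq2_gE (z : GaussianInt) : normSq2 (gE z) = Zsqrtd.norm z := by
  simp [normSq2, Zsqrtd.norm_def]; ring

lemma gE_ne_zero {z : GaussianInt} (hz : z ≠ 0) : gE z ≠ 0 := by
  intro h; exact hz (gE.injective (by rw [h, map_zero]))

lemma self_mem_glat (α : GaussianInt) : gE α ∈ glat α := by
  rw [mem_glat]; simp

lemma mul_mem_glat (α β : GaussianInt) : gE (β * α) ∈ glat α := by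
  rw [mem_glat, gE_symm_gE]; exact ⟨β, mul_comm β α⟩

lemma minvec_glat {α : GaussianInt} (hα : α ≠ 0) (β : GaussianInt) (hβ : IsUnit β) :
    IsMinVec (glat α) (gE (β * α)) := by
  refine ⟨mul_mem_glat α β, gE_ne_zero (mul_ne_zero hβ.ne_zero hα), ?_⟩
  intro y hy hy0
  rw [mem_glat] at hy
  obtain ⟨γ, hγ⟩ := hy
  have hyv : y = gE (gE.symm y) := (gE_gE_symm y).symm
  have hγ0 : γ ≠ 0 := by
    rintro rfl
    apply hy0
    rw [hyv, hγ, mul_zero, map_zero]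
  rw [hyv, hγ, normSq2_gE, normSq2_gE, Zsqrtd.norm_mul, Zsqrtd.norm_mul]
  have h1 : Zsqrtd.norm β = 1 := by
    have := Zsqrtd.norm_eq_one_iff.mpr hβ
    have hn := GaussianInt.norm_nonneg β
    omega
  have h2 : 1 ≤ Zsqrtd.norm γ := GaussianInt.norm_pos.mpr hγ0
  have h3 : 0 < Zsqrtd.norm α := GaussianInt.norm_pos.mpr hα
  nlinarith

lemma det2_key (α : GaussianInt) :
    det2 (gE (1 * α)) (gE ((⟨0,1⟩ : GaussianInt) * α)) = Zsqrtd.norm α := by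
  simp [det2, Zsqrtd.norm_def, Zsqrtd.re_mul, Zsqrtd.im_mul]

lemma glat_wr {α : GaussianInt} (hα : α ≠ 0) :
    IsFullRank (glat α) ∧ IsWellRounded (glat α) := by
  have hu : IsUnit (⟨0,1⟩ : GaussianInt) := by
    rw [← Zsqrtd.norm_eq_one_iff]
    decide
  have hdet : det2 (gE (1 * α)) (gE ((⟨0,1⟩ : GaussianInt) * α)) ≠ 0 := by
    rw [det2_key]; exact (GaussianInt.norm_pos.mpr hα).ne'
  refine ⟨⟨_, mul_mem_glat α 1, _, mul_mem_glat α ⟨0,1⟩, hdet⟩,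
    ⟨_, _, minvec_glat hα 1 isUnit_one, minvec_glat hα _ hu, hdet⟩⟩

noncomputable def redmap (u : ℕ) : (Fin 2 → ℤ) →+ (Fin 2 → ZMod u) where
  toFun v := fun j => (v j : ZMod u)
  map_zero' := by funext j; simp
  map_add' v w := by funext j; simp

lemma finite_index_set (u : ℕ) (hu : u ≠ 0) :
    {Λ : AddSubgroup (Fin 2 → ℤ) | Λ.index = u}.Finite := by
  have : Finite (AddSubgroup (Fin 2 → ZMod u)) := by
    haveI : NeZero u := ⟨hu⟩
    exact Finite.of_injective _ (SetLike.coe_injective (A := AddSubgroup (Fin 2 → ZMod u)))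
  apply Set.Finite.of_finite_image (f := fun Λ => Λ.map (redmap u)) (Set.toFinite _)
  intro Λ₁ h1 Λ₂ h2 heq
  have key : ∀ Λ : AddSubgroup (Fin 2 → ℤ), Λ.index = u →
      (Λ.map (redmap u)).comap (redmap u) = Λ := by
    intro Λ hΛ
    rw [AddSubgroup.comap_map_eq]
    have hker : (redmap u).ker ≤ Λ := by
      intro v hv
      have hdvd : ∀ j, (u : ℤ) ∣ v j := by
        intro j
        have : ((v j : ZMod u) : ZMod u) = 0 := congrFun (AddMonoidHom.mem_ker.mp hv) j
        exact_mod_cast (ZMod.intCast_zmod_eq_zero_iff_dvd _ _).mp this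
      choose w hw using hdvd
      have : v = u • w := by funext j; simp [hw j, mul_comm]
      rw [this, ← hΛ]
      exact AddSubgroup.nsmul_index_mem Λ w
    rw [sup_of_le_left hker]
  rw [← key Λ₁ h1, ← key Λ₂ h2]; exact congrArg _ heq

lemma gi_prime_of_norm {x : GaussianInt} {p : ℕ} (hp : p.Prime) (hx : Zsqrtd.norm x = p) :
    Prime x := by
  rw [← UniqueFactorizationMonoid.irreducible_iff_prime]
  constructor
  · rw [← Zsqrtd.norm_eq_one_iff, hx, Int.natAbs_natCast]
    exact hp.ne_one
  · intro a b hab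
    have hnn : (Zsqrtd.norm a).natAbs * (Zsqrtd.norm b).natAbs = p := by
      rw [← Int.natAbs_mul, ← Zsqrtd.norm_mul, ← hab, hx, Int.natAbs_natCast]
    rcases hp.eq_one_or_self_of_dvd (Zsqrtd.norm a).natAbs ⟨_, hnn.symm⟩ with h | h
    · exact Or.inl (Zsqrtd.norm_eq_one_iff.mp h)
    · refine Or.inr (Zsqrtd.norm_eq_one_iff.mp ?_)
      rw [h] at hnn
      have h2 := hp.pos
      nlinarith

lemma norm_dvd_of_dvd {x y : GaussianInt} (h : x ∣ y) : Zsqrtd.norm x ∣ Zsqrtd.norm y := by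
  obtain ⟨t, rfl⟩ := h; rw [Zsqrtd.norm_mul]; exact Dvd.intro _ rfl

lemma not_dvd_of_norm {x y : GaussianInt} {p r : ℕ} (hp : p.Prime) (hr : r.Prime)
    (hpr : p ≠ r) (hx : Zsqrtd.norm x = p) (hy : Zsqrtd.norm y = r) : ¬ x ∣ y := by
  intro h
  have := norm_dvd_of_dvd h
  rw [hx, hy, Int.natCast_dvd_natCast] at this
  exact hpr ((Nat.prime_dvd_prime_iff_eq hp hr).mp this)

lemma gi_unit_sq {t : GaussianInt} (ht : IsUnit t) :
    (t.re = 1 ∧ t.im = 0) ∨ (t.re = -1 ∧ t.im = 0) ∨ (t.re = 0 ∧ t.im = 1) ∨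
      (t.re = 0 ∧ t.im = -1) := by
  have h2 := Zsqrtd.norm_eq_one_iff.mpr ht
  have hn := GaussianInt.norm_nonneg t
  have h1 : Zsqrtd.norm t = 1 := by omega
  rw [Zsqrtd.norm_def] at h1
  have key : t.re * t.re + t.im * t.im = 1 := by linarith
  have hre1 : -1 ≤ t.re := by nlinarith [sq_nonneg t.im, sq_nonneg (t.re + 1)]
  have hre2 : t.re ≤ 1 := by nlinarith [sq_nonneg t.im, sq_nonneg (t.re - 1)]
  have him1 : -1 ≤ t.im := by nlinarith [sq_nonneg t.re, sq_nonneg (t.im + 1)]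
  have him2 : t.im ≤ 1 := by nlinarith [sq_nonneg t.re, sq_nonneg (t.im - 1)]
  interval_cases h : t.re <;> interval_cases h' : t.im <;> omega

lemma not_dvd_star {x : GaussianInt} {p : ℕ} (hp : p.Prime) (hp4 : p % 4 = 1)
    (hx : Zsqrtd.norm x = p) : ¬ x ∣ star x := by
  intro h
  obtain ⟨t, hts⟩ := h
  have hp0 : (p:ℤ) ≠ 0 := by exact_mod_cast hp.ne_zero
  have hnt : Zsqrtd.norm t = 1 := by
    have h0 := congrArg Zsqrtd.norm hts
    rw [Zsqrtd.norm_conj, Zsqrtd.norm_mul, hx] at h0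
    have : (p:ℤ) * 1 = (p:ℤ) * Zsqrtd.norm t := by linarith
    exact (mul_left_cancel₀ hp0 this).symm
  have ht : IsUnit t := Zsqrtd.norm_eq_one_iff.mp (by rw [hnt]; rfl)
  have h1 : x.re = x.re * t.re - x.im * t.im := by
    have := congrArg Zsqrtd.re hts
    simpa [Zsqrtd.re_mul, sub_eq_add_neg] using this
  have h2 : -x.im = x.re * t.im + x.im * t.re := by
    have := congrArg Zsqrtd.im hts
    simpa [Zsqrtd.im_mul] using this
  have hq : x.re * x.re + x.im * x.im = p := by
    rw [Zsqrtd.norm_def] at hx; linarith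
  have hp2 := hp.two_le
  rcases gi_unit_sq ht with ⟨ha, hb⟩ | ⟨ha, hb⟩ | ⟨ha, hb⟩ | ⟨ha, hb⟩ <;>
    rw [ha, hb] at h1 h2
  · have him : x.im = 0 := by omega
    rw [him] at hq
    have hn : x.re.natAbs * x.re.natAbs = p := by
      have := congrArg Int.natAbs hq
      simpa [Int.natAbs_mul] using this
    rcases hp.eq_one_or_self_of_dvd x.re.natAbs ⟨_, hn.symm⟩ with h | h <;> rw [h] at hn <;>
      nlinarith
  · have hre : x.re = 0 := by omega
    rw [hre] at hq
    have hn : x.im.natAbs * x.im.natAbs = p := by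
      have := congrArg Int.natAbs hq
      simpa [Int.natAbs_mul] using this
    rcases hp.eq_one_or_self_of_dvd x.im.natAbs ⟨_, hn.symm⟩ with h | h <;> rw [h] at hn <;>
      nlinarith
  · have hri : x.re = -x.im := by omega
    have h2p : (2 : ℤ) ∣ p := ⟨x.im * x.im, by rw [← hq, hri]; ring⟩
    have h2p' : (2:ℕ) ∣ p := by exact_mod_cast h2p
    have := (Nat.prime_dvd_prime_iff_eq Nat.prime_two hp).mp h2p'
    omega
  · have hri : x.re = x.im := by omega
    have h2p : (2 : ℤ) ∣ p := ⟨x.im * x.im, by rw [← hq, hri]; ring⟩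
    have h2p' : (2:ℕ) ∣ p := by exact_mod_cast h2p
    have := (Nat.prime_dvd_prime_iff_eq Nat.prime_two hp).mp h2p'
    omega

/-- The core counting lemma: for distinct primes `q i ≡ 1 mod 4`,
`NWR (∏ q i ^ m) ≥ (m+1)^n`. -/
lemma core_lemma (n m : ℕ) (q : Fin n → ℕ) (hq : Function.Injective q)
    (hQ : ∀ i, (q i).Prime ∧ q i % 4 = 1) :
    (m + 1) ^ n ≤ NWR (∏ i, q i ^ m) := by
  classical
  have hex : ∀ i, ∃ a b : ℕ, a ^ 2 + b ^ 2 = q i := by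
    intro i
    haveI := Fact.mk (hQ i).1
    exact Nat.Prime.sq_add_sq (by have := (hQ i).2; omega)
  choose a b hab using hex
  set π : Fin n → GaussianInt := fun i => ⟨(a i : ℤ), (b i : ℤ)⟩ with hπ
  have hnorm : ∀ i, Zsqrtd.norm (π i) = q i := by
    intro i
    rw [Zsqrtd.norm_def, ← hab i]
    push_cast
    ring
  have hnorms : ∀ i, Zsqrtd.norm (star (π i)) = q i := by
    intro i; rw [Zsqrtd.norm_conj]; exact hnorm i
  have hprime : ∀ i, Prime (π i) := fun i => gi_prime_of_norm (hQ i).1 (hnorm i)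
  have hsprime : ∀ i, Prime (star (π i)) := fun i => gi_prime_of_norm (hQ i).1 (hnorms i)
  have hqne : ∀ i j, i ≠ j → q i ≠ q j := fun i j hij h => hij (hq h)
  have hnds : ∀ i, ¬ π i ∣ star (π i) :=
    fun i => not_dvd_star (hQ i).1 (hQ i).2 (hnorm i)
  have hnd : ∀ i j, i ≠ j → ¬ π i ∣ π j :=
    fun i j hij => not_dvd_of_norm (hQ i).1 (hQ j).1 (hqne i j hij) (hnorm i) (hnorm j)
  have hnd' : ∀ i j, i ≠ j → ¬ π i ∣ star (π j) :=
    fun i j hij => not_dvd_of_norm (hQ i).1 (hQ j).1 (hqne i j hij) (hnorm i) (hnorms j)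
  set A : (Fin n → ℕ) → GaussianInt :=
    fun c => ∏ j, (π j) ^ (c j) * (star (π j)) ^ (m - c j) with hA
  have hA0 : ∀ c, A c ≠ 0 := by
    intro c
    apply Finset.prod_ne_zero_iff.mpr
    intro j _
    exact mul_ne_zero (pow_ne_zero _ (hprime j).ne_zero) (pow_ne_zero _ (hsprime j).ne_zero)
  have hmult : ∀ (c : Fin n → ℕ) (i : Fin n), emultiplicity (π i) (A c) = c i := by
    intro c i
    rw [hA, Finset.emultiplicity_prod (hprime i)]
    have hterm : ∀ j, emultiplicity (π i) ((π j) ^ (c j) * (star (π j)) ^ (m - c j))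
        = if j = i then (c i : ℕ∞) else 0 := by
      intro j
      rw [emultiplicity_mul (hprime i)]
      by_cases h : j = i
      · subst h
        rw [emultiplicity_pow_self_of_prime (hprime j),
          emultiplicity_pow (hprime j), emultiplicity_eq_zero.mpr (hnds j)]
        simp
      · rw [emultiplicity_pow (hprime i), emultiplicity_pow (hprime i),
          emultiplicity_eq_zero.mpr (hnd i j (Ne.symm h)),
          emultiplicity_eq_zero.mpr (hnd' i j (Ne.symm h))]
        simp [h]
    rw [Finset.sum_congr rfl (fun j _ => hterm j), Finset.sum_ite_eq' Finset.univ i]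
    simp
  have hnormA : ∀ (c : Fin n → ℕ), (∀ i, c i ≤ m) →
      Zsqrtd.norm (A c) = ((∏ i, q i ^ m : ℕ) : ℤ) := by
    intro c hc
    have hmp : Zsqrtd.norm (∏ j, π j ^ c j * star (π j) ^ (m - c j))
        = ∏ j, Zsqrtd.norm (π j ^ c j * star (π j) ^ (m - c j)) :=
      map_prod Zsqrtd.normMonoidHom _ Finset.univ
    simp only [hA]
    rw [hmp]
    push_cast
    apply Finset.prod_congr rfl
    intro j _
    have e1 : Zsqrtd.norm (π j ^ c j) = Zsqrtd.norm (π j) ^ c j :=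
      map_pow Zsqrtd.normMonoidHom _ _
    have e2 : Zsqrtd.norm (star (π j) ^ (m - c j)) = Zsqrtd.norm (star (π j)) ^ (m - c j) :=
      map_pow Zsqrtd.normMonoidHom _ _
    rw [Zsqrtd.norm_mul, e1, e2, hnorm j, hnorms j, ← pow_add]
    congr 1
    have := hc j
    omega
  -- the injection
  set F : (Fin n → Fin (m + 1)) → AddSubgroup (Fin 2 → ℤ) :=
    fun c => glat (A (fun i => (c i : ℕ))) with hF
  have hFinj : Function.Injective F := by
    intro c c' hcc
    have hcc' : glat (A (fun i => (c i : ℕ))) = glat (A (fun i => (c' i : ℕ))) := hcc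
    have hAss : Associated (A (fun i => (c i : ℕ))) (A (fun i => (c' i : ℕ))) := by
      apply associated_of_dvd_dvd
      · have := self_mem_glat (A (fun i => (c' i : ℕ)))
        rw [← hcc'] at this
        rw [mem_glat, gE_symm_gE] at this
        exact this
      · have := self_mem_glat (A (fun i => (c i : ℕ)))
        rw [hcc'] at this
        rw [mem_glat, gE_symm_gE] at this
        exact this
    funext i
    have h1 := hmult (fun i => (c i : ℕ)) i
    have h2 := hmult (fun i => (c' i : ℕ)) i
    rw [emultiplicity_eq_of_associated_right hAss, h2] at h1
    have : (c' i : ℕ) = (c i : ℕ) := by exact_mod_cast h1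
    exact (Fin.ext this.symm : c i = c' i)
  have hu0 : (∏ i, q i ^ m) ≠ 0 := by
    apply Finset.prod_ne_zero_iff.mpr
    intro j _
    exact pow_ne_zero _ (hQ j).1.ne_zero
  have hrange : Set.range F ⊆
      {Λ : AddSubgroup (Fin 2 → ℤ) | IsFullRank Λ ∧ IsWellRounded Λ ∧
        Λ.index = ∏ i, q i ^ m} := by
    rintro _ ⟨c, rfl⟩
    have h0 := hA0 (fun i => (c i : ℕ))
    obtain ⟨hfr, hwr⟩ := glat_wr h0
    refine ⟨hfr, hwr, ?_⟩
    rw [hF, glat_index, hnormA _ (fun i => by omega), Int.natAbs_natCast]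
  calc (m + 1) ^ n = Nat.card (Fin n → Fin (m + 1)) := by simp
    _ = (Set.range F).ncard := by
        rw [← Nat.card_coe_set_eq, Nat.card_range_of_injective hFinj]
    _ ≤ NWR (∏ i, q i ^ m) :=
        Set.ncard_le_ncard hrange
          (Set.Finite.subset (finite_index_set _ hu0) (fun Λ h => h.2.2))

/-- If `q₁, …, q_n` are distinct primes each congruent to 1 mod 4 and
`u = q₁²···q_n²`, then `𝒩(u) ≥ 3^n`. Consequently, for every positive integer `k`
there exist positive integers `u` with `𝒩(u) ≥ (log u)^k`. -/
theorem stmt18 :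
    (∀ (n : ℕ), 0 < n → ∀ q : Fin n → ℕ, Function.Injective q →
      (∀ i, (q i).Prime ∧ q i % 4 = 1) →
      ∀ u : ℕ, u = ∏ i, q i ^ 2 → 3 ^ n ≤ NWR u) ∧
    (∀ k : ℕ, 0 < k → ∃ u : ℕ, 0 < u ∧ (Real.log u) ^ k ≤ (NWR u : ℝ)) := by
  constructor
  · intro n _ q hq hQ u hu
    have := core_lemma n 2 q hq hQ
    rw [hu]
    exact this
  · intro k hk
    have hinf : {p : ℕ | p.Prime ∧ (p : ZMod 4) = 1}.Infinite :=
      Nat.infinite_setOfPred_prime_and_eq_mod isUnit_one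
    obtain ⟨T, hTsub, hTfin, hTncard⟩ := hinf.exists_subset_ncard_eq (2 * k)
    set s : Finset ℕ := hTfin.toFinset with hs
    have hcard : s.card = 2 * k := by
      rwa [hs, ← Set.ncard_eq_toFinset_card T hTfin]
    set q : Fin (2 * k) → ℕ := fun i => (s.equivFin.symm (Fin.cast hcard.symm i) : ℕ) with hqdef
    have hqinj : Function.Injective q := by
      intro i j hij
      have := s.equivFin.symm.injective (Subtype.ext hij)
      simpa [Fin.ext_iff] using this
    have hqmem : ∀ i, q i ∈ T := by
      intro i
      have : q i ∈ s := (s.equivFin.symm (Fin.cast hcard.symm i)).2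
      rwa [hs, Set.Finite.mem_toFinset] at this
    have hQ : ∀ i, (q i).Prime ∧ q i % 4 = 1 := by
      intro i
      obtain ⟨hp, hmod⟩ := hTsub (hqmem i)
      refine ⟨hp, ?_⟩
      have h1 : ((q i : ℕ) : ZMod 4) = ((1 : ℕ) : ZMod 4) := by rw [hmod]; norm_num
      have h2 : q i % 4 = 1 % 4 := (ZMod.natCast_eq_natCast_iff _ _ _).mp h1
      omega
    have hq1 : ∀ i, 1 ≤ q i := fun i => (hQ i).1.one_lt.le.trans' (by norm_num)
    set S : ℝ := ∑ i, Real.log (q i) with hS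
    have hS0 : 0 ≤ S := Finset.sum_nonneg fun i _ =>
      Real.log_nonneg (by exact_mod_cast hq1 i)
    set m : ℕ := ⌈S⌉₊ + 1 with hm
    have hSm : S ≤ (m : ℝ) := by
      calc S ≤ (⌈S⌉₊ : ℝ) := Nat.le_ceil S
        _ ≤ (m : ℝ) := by exact_mod_cast Nat.le_succ _
    refine ⟨∏ i, q i ^ m, ?_, ?_⟩
    · exact Finset.prod_pos fun i _ => pow_pos ((hQ i).1.pos) m
    · have hcore := core_lemma (2 * k) m q hqinj hQ
      have hlog : Real.log ((∏ i, q i ^ m : ℕ) : ℝ) = (m : ℝ) * S := by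
        rw [Nat.cast_prod]
        rw [Real.log_prod (fun i _ =>
          Nat.cast_ne_zero.mpr (pow_ne_zero _ (hQ i).1.ne_zero))]
        rw [hS, Finset.mul_sum]
        refine Finset.sum_congr rfl fun i _ => ?_
        rw [Nat.cast_pow, Real.log_pow]
      rw [hlog]
      have hm0 : (0:ℝ) ≤ (m:ℝ) := Nat.cast_nonneg m
      have h1 : (m:ℝ) * S ≤ (m:ℝ) * (m:ℝ) := mul_le_mul_of_nonneg_left hSm hm0
      have h2 : (m:ℝ) * (m:ℝ) ≤ ((m:ℝ) + 1) ^ 2 := by nlinarith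
      calc ((m : ℝ) * S) ^ k ≤ (((m:ℝ) + 1) ^ 2) ^ k := by
            exact pow_le_pow_left₀ (mul_nonneg hm0 hS0) (h1.trans h2) k
        _ = (((m + 1) ^ (2 * k) : ℕ) : ℝ) := by
            push_cast
            rw [← pow_mul]
        _ ≤ (NWR (∏ i, q i ^ m) : ℝ) := by exact_mod_cast hcore
end
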